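/- arXiv:2507.15654 — 5 statements merged into one kernel-verified Lean document; each statement's English description precedes it below -/
import Mathlib

section
/- There exists a sign-reversing involution on the set of ordered set partitions of [n] other than the partition into singletons in natural order ({1},{2},...,{n}); here the sign of an ordered partition into k blocks is (-1)^{n+k}. Consequently, the set of ordered partitions of [n] with sign +1 (i.e., with n ≡ k mod 2) other than the identity partition is equinumerous with the set of ordered partitions with sign −1. -/
/-- `l` is an ordered set partition of `Fin n`: a list of pairwise disjoint nonempty
subsets whose union is everything. -/
def IsOSP {n : ℕ} (l : List (Finset (Fin n))) : Prop :=
  (∀ B ∈ l, B.Nonempty) ∧ l.Pairwise Disjoint ∧ l.foldr (· ∪ ·) ∅ = Finset.univ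

/-- The identity ordered partition `[{1},{2},...,{n}]`. -/
def identOSP (n : ℕ) : List (Finset (Fin n)) := (List.finRange n).map fun i => {i}

/-- The sign of an ordered partition of an `n`-set into `k` blocks is `(-1)^(n+k)`. -/
def ospSign (n : ℕ) (l : List (Finset (Fin n))) : ℤ := (-1) ^ (n + l.length)


/-!
Removing the first block `B` of an ordered partition of a finite set `s` leaves an ordered
partition of `s \ B`. Hence the signed count `∑ (-1)^k` over the ordered partitions of `s` into
`k` blocks equals `-∑_{C ⊂ s}` of the signed counts for `C`, and since `∑_{C ⊆ s} (-1)^|C| = 0`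
for nonempty `s`, induction gives `(-1)^|s|`. With the sign `(-1)^(n+k)` the ordered partitions of
`[n]` therefore have total sign `1`, which is exactly the contribution of the identity partition.
So the remaining ones are equally many of each sign, and any bijection between the two classes,
extended by its inverse, is a sign-reversing involution.
-/

open Finset

section OrderedPartition

variable {α : Type*} [DecidableEq α]

def IsOrderedPartition (s : Finset α) (l : List (Finset α)) : Prop :=
  (∀ B ∈ l, B.Nonempty) ∧ l.Pairwise Disjoint ∧ l.foldr (· ∪ ·) ∅ = s

theorem List.mem_foldr_union {l : List (Finset α)} {x : α} :
    x ∈ l.foldr (· ∪ ·) ∅ ↔ ∃ B ∈ l, x ∈ B := by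
  induction l with
  | nil => simp
  | cons B t ih => simp [ih]

section

variable {s B : Finset α} {l : List (Finset α)}

@[simp]
theorem isOrderedPartition_nil : IsOrderedPartition s [] ↔ s = ∅ := by
  simp [IsOrderedPartition, eq_comm]

theorem isOrderedPartition_cons :
    IsOrderedPartition s (B :: l) ↔ B.Nonempty ∧ B ⊆ s ∧ IsOrderedPartition (s \ B) l := by
  have subset_union {C : Finset α} (hC : C ∈ l) : C ⊆ l.foldr (· ∪ ·) ∅ :=
    fun x hx => List.mem_foldr_union.2 ⟨C, hC, hx⟩
  simp only [IsOrderedPartition, List.forall_mem_cons, List.pairwise_cons, List.foldr_cons]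
  constructor
  · rintro ⟨⟨hB, hl⟩, ⟨hBl, hpw⟩, rfl⟩
    have hdisj : Disjoint B (l.foldr (· ∪ ·) ∅) := by
      rw [Finset.disjoint_left]
      intro x hxB hx
      obtain ⟨C, hC, hxC⟩ := List.mem_foldr_union.1 hx
      exact Finset.disjoint_left.1 (hBl C hC) hxB hxC
    exact ⟨hB, subset_union_left, hl, hpw, (union_sdiff_cancel_left hdisj).symm⟩
  · rintro ⟨hB, hBs, hl, hpw, hunion⟩
    refine ⟨⟨hB, hl⟩, ⟨fun C hC => ?_, hpw⟩, by rw [hunion, union_sdiff_of_subset hBs]⟩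
    exact disjoint_sdiff.mono_right (hunion ▸ subset_union hC)

end

def orderedPartitions (s : Finset α) : Finset (List (Finset α)) :=
  if s = ∅ then {[]} else
    s.ssubsets.attach.biUnion fun C => (orderedPartitions C.1).image ((s \ C.1) :: ·)
termination_by s.card
decreasing_by exact card_lt_card (mem_ssubsets.1 C.2)

theorem orderedPartitions_empty : orderedPartitions (∅ : Finset α) = {[]} := by
  rw [orderedPartitions, if_pos rfl]

theorem orderedPartitions_of_nonempty {s : Finset α} (hs : s.Nonempty) :
    orderedPartitions s =
      s.ssubsets.biUnion fun C => (orderedPartitions C).image ((s \ C) :: ·) := by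
  rw [orderedPartitions, if_neg hs.ne_empty]
  ext l
  simp

theorem mem_orderedPartitions {s : Finset α} {l : List (Finset α)} :
    l ∈ orderedPartitions s ↔ IsOrderedPartition s l := by
  induction s using Finset.strongInduction generalizing l with | H s ih => ?_
  rcases s.eq_empty_or_nonempty with rfl | hs
  · cases l with
    | nil => simp [orderedPartitions_empty]
    | cons B t =>
      simp +contextual [orderedPartitions_empty, isOrderedPartition_cons, subset_empty,
        ← not_nonempty_iff_eq_empty]
  rw [orderedPartitions_of_nonempty hs]
  cases l with
  | nil => simp [hs.ne_empty]
  | cons B t =>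
    simp only [mem_biUnion, mem_ssubsets, mem_image, List.cons.injEq,
      isOrderedPartition_cons]
    constructor
    · rintro ⟨C, hCs, t, ht, rfl, rfl⟩
      rw [Finset.sdiff_sdiff_eq_self hCs.subset]
      exact ⟨sdiff_nonempty.2 (not_subset_of_ssubset hCs), sdiff_subset, (ih C hCs).1 ht⟩
    · rintro ⟨hB, hBs, ht⟩
      have hCs : s \ B ⊂ s := sdiff_ssubset hBs hB
      exact ⟨s \ B, hCs, t, (ih _ hCs).2 ht, Finset.sdiff_sdiff_eq_self hBs, rfl⟩

theorem sum_orderedPartitions_neg_one_pow_length (s : Finset α) :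
    ∑ l ∈ orderedPartitions s, (-1 : ℤ) ^ l.length = (-1) ^ s.card := by
  induction s using Finset.strongInduction with | H s ih => ?_
  rcases s.eq_empty_or_nonempty with rfl | hs
  · simp [orderedPartitions_empty]
  have hdisj : (s.ssubsets : Set (Finset α)).PairwiseDisjoint
      fun C => (orderedPartitions C).image ((s \ C) :: ·) := by
    intro C hC D hD hCD
    simp only [Function.onFun, disjoint_left, mem_image]
    rintro _ ⟨t, -, rfl⟩ ⟨u, -, hu⟩
    have hCs := (mem_ssubsets.1 hC).subset
    have hDs := (mem_ssubsets.1 hD).subset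
    apply hCD
    rw [← Finset.sdiff_sdiff_eq_self hCs, ← Finset.sdiff_sdiff_eq_self hDs, (List.cons.inj hu).1]
  calc ∑ l ∈ orderedPartitions s, (-1 : ℤ) ^ l.length
      = ∑ C ∈ s.ssubsets, -(-1 : ℤ) ^ C.card := by
        rw [orderedPartitions_of_nonempty hs, sum_biUnion hdisj]
        refine sum_congr rfl fun C hC => ?_
        rw [sum_image fun _ _ _ _ h => List.cons_injective h]
        simp [pow_succ, ih C (mem_ssubsets.1 hC)]
    _ = (-1) ^ s.card := by
        rw [sum_neg_distrib, ssubsets, sum_erase_eq_sub (mem_powerset_self s),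
          sum_powerset_neg_one_pow_card_of_nonempty hs]
        ring

end OrderedPartition

theorem card_filter_eq_one_eq_card_filter_eq_neg_one {ι : Type*} {t : Finset ι} {g : ι → ℤ}
    (hg : ∀ i ∈ t, g i = 1 ∨ g i = -1) (hsum : ∑ i ∈ t, g i = 0) :
    #{i ∈ t | g i = 1} = #{i ∈ t | g i = -1} := by
  have hsplit : ∀ i ∈ t, g i = (if g i = 1 then 1 else 0) - (if g i = -1 then 1 else 0) := by
    intro i hi
    rcases hg i hi with h | h <;> simp [h]
  rw [sum_congr rfl hsplit, sum_sub_distrib, sum_boole, sum_boole, sub_eq_zero] at hsum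
  exact_mod_cast hsum

theorem exists_involutive_neg_of_card_eq {X : Type*} [Finite X] {g : X → ℤ}
    (hg : ∀ x, g x = 1 ∨ g x = -1) (h : Nat.card {x // g x = 1} = Nat.card {x // g x = -1}) :
    ∃ f : X → X, Function.Involutive f ∧ ∀ x, g (f x) = -g x := by
  classical
  have hne : ∀ x, g x ≠ 1 ↔ g x = -1 := fun x => by rcases hg x with hx | hx <;> simp [hx]
  rw [← Nat.card_congr (Equiv.subtypeEquivRight hne)] at h
  obtain ⟨e⟩ := Finite.card_eq.1 h
  let τ := (Equiv.sumCongr e e.symm).trans (Equiv.sumComm _ _)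
  have hτ : Function.Involutive τ := by rintro (x | x) <;> simp [τ]
  refine ⟨fun x => Equiv.sumCompl _ (τ ((Equiv.sumCompl (g · = 1)).symm x)),
    fun x => by simp [hτ _], fun x => ?_⟩
  by_cases hx : g x = 1
  · simp [hx, τ, ← hne, (e ⟨x, hx⟩).2]
  · simp [τ, (hne x).1 hx, (e.symm ⟨x, hx⟩).2]

theorem isOSP_iff {n : ℕ} {l : List (Finset (Fin n))} :
    IsOSP l ↔ IsOrderedPartition univ l := Iff.rfl

theorem isOSP_identOSP (n : ℕ) : IsOSP (identOSP n) := by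
  refine ⟨?_, ?_, ?_⟩
  · simp [identOSP]
  · rw [identOSP, List.pairwise_map]
    exact (List.nodup_finRange n).imp disjoint_singleton.2
  · ext x
    simp [List.mem_foldr_union, identOSP]

theorem ospSign_identOSP (n : ℕ) : ospSign n (identOSP n) = 1 := by
  simp [ospSign, identOSP]

theorem ospSign_eq_one_or_eq_neg_one {n : ℕ} (l : List (Finset (Fin n))) :
    ospSign n l = 1 ∨ ospSign n l = -1 :=
  neg_one_pow_eq_or ℤ _

theorem sum_ospSign_erase_identOSP (n : ℕ) :
    ∑ l ∈ (orderedPartitions univ).erase (identOSP n), ospSign n l = 0 := by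
  have hsum : ∑ l ∈ orderedPartitions (univ : Finset (Fin n)), ospSign n l = 1 := by
    simp_rw [ospSign, pow_add, ← mul_sum, sum_orderedPartitions_neg_one_pow_length]
    simp [← pow_add]
  rw [sum_erase_eq_sub (mem_orderedPartitions.2 (isOSP_identOSP n)), hsum, ospSign_identOSP,
    sub_self]

theorem natCard_ospSign_eq (n : ℕ) (c : ℤ) :
    Nat.card {l : List (Finset (Fin n)) // IsOSP l ∧ l ≠ identOSP n ∧ ospSign n l = c} =
      #{l ∈ (orderedPartitions univ).erase (identOSP n) | ospSign n l = c} :=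
  Nat.subtype_card _ fun l => by
    simp only [mem_filter, mem_erase, mem_orderedPartitions, isOSP_iff]
    tauto

theorem natCard_ospSign_one_eq_natCard_ospSign_neg_one (n : ℕ) :
    Nat.card {l : List (Finset (Fin n)) // IsOSP l ∧ l ≠ identOSP n ∧ ospSign n l = 1} =
      Nat.card {l : List (Finset (Fin n)) // IsOSP l ∧ l ≠ identOSP n ∧ ospSign n l = -1} := by
  rw [natCard_ospSign_eq, natCard_ospSign_eq]
  exact card_filter_eq_one_eq_card_filter_eq_neg_one
    (fun l _ => ospSign_eq_one_or_eq_neg_one l) (sum_ospSign_erase_identOSP n)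

theorem sign_reversing_involution_on_OSP (n : ℕ) :
    (∃ f : {l : List (Finset (Fin n)) // IsOSP l ∧ l ≠ identOSP n} →
           {l : List (Finset (Fin n)) // IsOSP l ∧ l ≠ identOSP n},
      Function.Involutive f ∧ ∀ p, ospSign n (f p).1 = - ospSign n p.1) ∧
    Nat.card {l : List (Finset (Fin n)) // IsOSP l ∧ l ≠ identOSP n ∧ ospSign n l = 1} =
      Nat.card {l : List (Finset (Fin n)) // IsOSP l ∧ l ≠ identOSP n ∧ ospSign n l = -1} := by
  have hcard := natCard_ospSign_one_eq_natCard_ospSign_neg_one n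
  refine ⟨?_, hcard⟩
  have : Finite {l : List (Finset (Fin n)) // IsOSP l ∧ l ≠ identOSP n} :=
    ((orderedPartitions univ).finite_toSet.subset
      fun l hl => mem_orderedPartitions.2 hl.1).to_subtype
  refine exists_involutive_neg_of_card_eq (fun _ => ospSign_eq_one_or_eq_neg_one _) ?_
  rw [Nat.card_congr (Equiv.subtypeSubtypeEquivSubtypeInter _ (ospSign n · = 1)),
    Nat.card_congr (Equiv.subtypeSubtypeEquivSubtypeInter _ (ospSign n · = -1))]
  simpa [and_assoc] using hcard
end

section
/- With g_i = i+1 for all i ≥ 1, the alternating weighted Ward sum ∑_k (-1)^{n+k} · k! · C(n+k, k) · S(n,k) equals (n+1)^n for all n ≥ 1, where S(n,k) is the Stirling number of the second kind and C denotes binomial coefficients. -/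
def stirling2 : ℕ → ℕ → ℕ
  | 0, 0 => 1
  | 0, _ + 1 => 0
  | _ + 1, 0 => 0
  | n + 1, k + 1 => (k + 1) * stirling2 n (k + 1) + stirling2 n k

/-!
Expanding `x ^ n` in the falling factorials `x (x - 1) ⋯ (x - k + 1)` has the Stirling numbers of
the second kind as coefficients. At `x = -(n + 1)` the `k`-th falling factorial is
`(-1) ^ k (n + 1) (n + 2) ⋯ (n + k) = (-1) ^ k k! C(n + k, k)`, so the alternating sum is
`(-1) ^ n (-(n + 1)) ^ n = (n + 1) ^ n`.
-/

open Finset Polynomial Nat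

theorem stirling2_eq_stirlingSecond : ∀ n k, stirling2 n k = stirlingSecond n k
  | 0, 0 | 0, _ + 1 | _ + 1, 0 => rfl
  | n + 1, k + 1 => by
    rw [stirling2, stirlingSecond_succ_succ, stirling2_eq_stirlingSecond n (k + 1),
      stirling2_eq_stirlingSecond n k]

theorem X_pow_eq_sum_stirlingSecond_smul_descPochhammer (R : Type*) [Ring R] (n : ℕ) :
    (X : R[X]) ^ n = ∑ k ∈ range (n + 1), stirlingSecond n k • descPochhammer R k := by
  induction n with
  | zero => simp
  | succ n ih =>
    have shift : ∑ k ∈ range (n + 1), stirlingSecond n k • k • descPochhammer R k =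
        ∑ k ∈ range (n + 1), stirlingSecond n (k + 1) • (k + 1) • descPochhammer R (k + 1) := by
      rw [sum_range_succ', sum_range_succ, stirlingSecond_eq_zero_of_lt (lt_add_one n)]
      simp
    calc (X : R[X]) ^ (n + 1)
        = ∑ k ∈ range (n + 1),
            stirlingSecond n k • (descPochhammer R (k + 1) + k • descPochhammer R k) := by
          rw [pow_succ, ih, sum_mul]
          refine sum_congr rfl fun k _ => ?_
          rw [descPochhammer_succ_right, smul_mul_assoc, mul_sub, ← Nat.cast_comm,
            ← nsmul_eq_mul, sub_add_cancel]
      _ = ∑ k ∈ range (n + 1), stirlingSecond (n + 1) (k + 1) • descPochhammer R (k + 1) := by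
          simp only [smul_add]
          rw [sum_add_distrib, shift, ← sum_add_distrib]
          refine sum_congr rfl fun k _ => ?_
          rw [stirlingSecond_succ_succ, smul_smul, ← add_smul]
          congr 1
          ring
      _ = ∑ k ∈ range (n + 2), stirlingSecond (n + 1) k • descPochhammer R k := by
          rw [sum_range_succ' _ (n + 1)]
          simp

theorem descPochhammer_eval_neg_natCast_add_one (R : Type*) [Ring R] (n k : ℕ) :
    (descPochhammer R k).eval (-(n + 1 : R)) = (-1) ^ k * (n + 1).ascFactorial k := by
  have h := ascPochhammer_eval_neg_eq_descPochhammer R (-(n + 1 : R)) k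
  rw [neg_neg, ← Nat.cast_add_one, ascPochhammer_nat_eq_natCast_ascFactorial,
    Nat.cast_add_one] at h
  rw [h, ← mul_assoc, ← pow_add, ← two_mul, pow_mul, neg_one_sq, one_pow, one_mul]

theorem enriched_alternating_sum_general (n : ℕ) :
    ∑ k ∈ Finset.range (n + 1),
      (-1 : ℤ) ^ (n + k) * (Nat.factorial k) * (Nat.choose (n + k) k) * (stirling2 n k) =
      (n + 1) ^ n := by
  have expansion :=
    congrArg (eval (-(n + 1 : ℤ))) (X_pow_eq_sum_stirlingSecond_smul_descPochhammer ℤ n)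
  simp only [eval_pow, eval_X, eval_finsetSum, nsmul_eq_mul, eval_natCast_mul,
    descPochhammer_eval_neg_natCast_add_one, ascFactorial_eq_factorial_mul_choose] at expansion
  calc ∑ k ∈ range (n + 1),
        (-1 : ℤ) ^ (n + k) * (Nat.factorial k) * (Nat.choose (n + k) k) * (stirling2 n k)
      = (-1) ^ n * ∑ k ∈ range (n + 1),
          (stirlingSecond n k : ℤ) * ((-1) ^ k * ↑(k ! * (n + k).choose k)) := by
        rw [mul_sum]
        refine sum_congr rfl fun k _ => ?_
        rw [stirling2_eq_stirlingSecond, pow_add]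
        push_cast
        ring
    _ = (-1) ^ n * (-(n + 1)) ^ n := by rw [expansion]
    _ = (n + 1) ^ n := by rw [← mul_pow, neg_one_mul, neg_neg]

theorem enriched_alternating_sum (n : ℕ) (hn : 1 ≤ n) :
    ∑ k ∈ Finset.range (n + 1),
      (-1 : ℤ) ^ (n + k) * (Nat.factorial k) * (Nat.choose (n + k) k) * (stirling2 n k) =
      (n + 1) ^ n :=
  enriched_alternating_sum_general n
end

section
/- For all n ≥ 1 and k ≥ 1, the number of partitions of [n+k] into k blocks each of size ≥ 2, where each block of size i+1 is additionally weighted by factor (i+1) (i.e., the weighted count with weights g_i = i+1), equals k! · C(n+k, k) · S(n,k). -/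
open Function Finset

private lemma miss {n : ℕ} {β : Type} (f : Fin (n+1) → β) (hf : Surjective f)
    (hns : ¬ Surjective (f ∘ Fin.castSucc)) : ∀ i, f (Fin.castSucc i) ≠ f (Fin.last n) := by
  intro i hi
  apply hns
  intro b
  obtain ⟨j, hj⟩ := hf b
  rcases Fin.eq_castSucc_or_eq_last j with ⟨j', rfl⟩ | rfl
  · exact ⟨j', hj⟩
  · exact ⟨i, hi.trans hj⟩

private lemma snoc_surj {n : ℕ} {β : Type} {g : Fin n → β} {y : β}
    (hg : ∀ b, b ≠ y → ∃ i, g i = b) : Surjective (Fin.snoc g y : Fin (n+1) → β) := by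
  intro b
  rcases eq_or_ne b y with rfl | hb
  · exact ⟨Fin.last n, Fin.snoc_last _ _⟩
  · obtain ⟨i, hi⟩ := hg b hb
    exact ⟨Fin.castSucc i, by rw [Fin.snoc_castSucc, hi]⟩

theorem card_surj_fin (n : ℕ) : ∀ (β : Type) [Fintype β] [DecidableEq β],
    Fintype.card {f : Fin n → β // Surjective f}
      = (Fintype.card β).factorial * stirling2 n (Fintype.card β) := by
  induction n with
  | zero =>
    intro β _ _
    rcases h : Fintype.card β with _ | m
    · haveI : IsEmpty β := Fintype.card_eq_zero_iff.mp h
      have hs : Surjective (fun i : Fin 0 => (isEmptyElim i : β)) := fun b => isEmptyElim b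
      rw [Fintype.card_eq_one_iff.mpr ⟨⟨_, hs⟩, fun y => Subtype.ext (funext fun i => i.elim0)⟩]
      rfl
    · obtain ⟨b⟩ : Nonempty β := Fintype.card_pos_iff.mp (by omega)
      rw [Fintype.card_eq_zero_iff.mpr ⟨fun ⟨f, hf⟩ => by obtain ⟨a, _⟩ := hf b; exact a.elim0⟩]
      simp [stirling2]
  | succ n ih =>
    intro β _ _
    rcases h : Fintype.card β with _ | m
    · haveI : IsEmpty β := Fintype.card_eq_zero_iff.mp h
      rw [Fintype.card_eq_zero_iff.mpr ⟨fun ⟨f, _⟩ => isEmptyElim (f 0)⟩]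
      simp [stirling2]
    · rw [Fintype.card_subtype]
      have fib : (univ.filter (Surjective : (Fin (n+1) → β) → Prop)).card
          = ∑ y : β, ((univ.filter (Surjective : (Fin (n+1) → β) → Prop)).filter
              (fun f => f (Fin.last n) = y)).card :=
        card_eq_sum_card_fiberwise (fun f _ => mem_univ _)
      have percard : ∀ y : β,
          ((univ.filter (Surjective : (Fin (n+1) → β) → Prop)).filter
              (fun f => f (Fin.last n) = y)).card
            = (m+1).factorial * stirling2 n (m+1) + m.factorial * stirling2 n m := by
        intro y
        have hsplit := (card_union_of_disjoint (disjoint_filter_filter_not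
            ((univ.filter (Surjective : (Fin (n+1) → β) → Prop)).filter
              (fun f => f (Fin.last n) = y)) _
            (fun f => Surjective (f ∘ Fin.castSucc)))).symm.trans
          (congrArg Finset.card (filter_union_filter_not_eq
            (p := (fun f => Surjective (f ∘ Fin.castSucc))) _)) |>.symm
        rw [hsplit]
        have hU : (((univ.filter (Surjective : (Fin (n+1) → β) → Prop)).filter
              (fun f => f (Fin.last n) = y)).filter
                (fun f => Surjective (f ∘ Fin.castSucc))).card
            = (univ.filter (Surjective : (Fin n → β) → Prop)).card := by
          refine card_bij' (fun f _ => f ∘ Fin.castSucc) (fun g _ => Fin.snoc g y) ?_ ?_ ?_ ?_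
          · intro f hf
            exact mem_filter.mpr ⟨mem_univ _, (mem_filter.mp hf).2⟩
          · intro g hg
            have hg' := (mem_filter.mp hg).2
            have hc : (Fin.snoc g y : Fin (n+1) → β) ∘ Fin.castSucc = g :=
              funext fun i => Fin.snoc_castSucc _ _ _
            refine mem_filter.mpr ⟨mem_filter.mpr ⟨mem_filter.mpr ⟨mem_univ _, ?_⟩,
              Fin.snoc_last _ _⟩, by rw [hc]; exact hg'⟩
            exact snoc_surj (fun b _ => hg' b)
          · intro f hf
            have h2 := (mem_filter.mp (mem_filter.mp (mem_filter.mp hf).1).1).2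
            have hl := (mem_filter.mp (mem_filter.mp hf).1).2
            funext x
            refine Fin.lastCases ?_ ?_ x
            · simp [Fin.snoc_last, hl]
            · intro i; simp [Fin.snoc_castSucc]
          · intro g _
            funext i
            simp [Fin.snoc_castSucc]
        have hV : (((univ.filter (Surjective : (Fin (n+1) → β) → Prop)).filter
              (fun f => f (Fin.last n) = y)).filter
                (fun f => ¬ Surjective (f ∘ Fin.castSucc))).card
            = (univ.filter (Surjective : (Fin n → {z : β // z ≠ y}) → Prop)).card := by
          refine card_bij' (fun f hf => fun i =>
              (⟨f (Fin.castSucc i), ?_⟩ : {z : β // z ≠ y}))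
            (fun g _ => Fin.snoc (fun i => (g i).1) y) ?_ ?_ ?_ ?_
          · have hsurj := (mem_filter.mp (mem_filter.mp (mem_filter.mp hf).1).1).2
            have hl := (mem_filter.mp (mem_filter.mp hf).1).2
            have hns := (mem_filter.mp hf).2
            rw [← hl]
            exact miss f hsurj hns i
          · intro f hf
            have hsurj := (mem_filter.mp (mem_filter.mp (mem_filter.mp hf).1).1).2
            have hl := (mem_filter.mp (mem_filter.mp hf).1).2
            refine mem_filter.mpr ⟨mem_univ _, ?_⟩
            rintro ⟨z, hz⟩
            obtain ⟨j, hj⟩ := hsurj z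
            have hjl : j ≠ Fin.last n := by
              rintro rfl
              exact hz (hj.symm.trans hl)
            rcases Fin.eq_castSucc_or_eq_last j with ⟨i, rfl⟩ | rfl
            · exact ⟨i, Subtype.ext hj⟩
            · exact absurd rfl hjl
          · intro g hg
            have hg' := (mem_filter.mp hg).2
            refine mem_filter.mpr ⟨mem_filter.mpr ⟨mem_filter.mpr ⟨mem_univ _, ?_⟩,
              Fin.snoc_last _ _⟩, ?_⟩
            · refine snoc_surj (fun b hb => ?_)
              obtain ⟨i, hi⟩ := hg' ⟨b, hb⟩
              exact ⟨i, congrArg Subtype.val hi⟩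
            · intro hs
              obtain ⟨i, hi⟩ := hs y
              have : (Fin.snoc (fun i => (g i).1) y : Fin (n+1) → β) (Fin.castSucc i)
                  = (g i).1 := Fin.snoc_castSucc _ _ _
              exact (g i).2 ((this.symm.trans hi))
          · intro f hf
            have hl := (mem_filter.mp (mem_filter.mp hf).1).2
            funext x
            refine Fin.lastCases ?_ ?_ x
            · simp [Fin.snoc_last, hl]
            · intro i; simp [Fin.snoc_castSucc]
          · intro g _
            funext i
            exact Subtype.ext (by simp [Fin.snoc_castSucc])
        have hcard1 : (univ.filter (Surjective : (Fin n → β) → Prop)).card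
            = (m+1).factorial * stirling2 n (m+1) := by
          rw [← Fintype.card_subtype, ih β, h]
        have hcard2 : (univ.filter (Surjective : (Fin n → {z : β // z ≠ y}) → Prop)).card
            = m.factorial * stirling2 n m := by
          have hc : Fintype.card {z : β // z ≠ y} = m := by
            rw [Fintype.card_subtype]
            rw [show (univ.filter (fun z : β => z ≠ y)) = univ.erase y from filter_ne' univ y]
            rw [card_erase_of_mem (mem_univ _), card_univ, h]
            exact Nat.succ_sub_one m
          rw [← Fintype.card_subtype, ih {z : β // z ≠ y}, hc]
        rw [hU, hV, hcard1, hcard2]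
      rw [fib]
      rw [Finset.sum_congr rfl (fun y _ => percard y), Finset.sum_const, card_univ, h]
      simp only [stirling2, Nat.factorial_succ, smul_eq_mul]
      ring

instance kerDec {α β : Type*} [DecidableEq β] (r : α → β) : DecidableRel (Setoid.ker r).r :=
  fun a b => decidable_of_iff (r a = r b) Iff.rfl

theorem card_surj (γ β : Type) [Fintype γ] [DecidableEq γ] [Fintype β] [DecidableEq β] :
    Fintype.card {f : γ → β // Surjective f}
      = (Fintype.card β).factorial * stirling2 (Fintype.card γ) (Fintype.card β) := by
  rw [← card_surj_fin (Fintype.card γ) β]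
  refine Fintype.card_congr (Equiv.subtypeEquiv
    (Equiv.arrowCongr (Fintype.equivFin γ) (Equiv.refl β)) (fun f => ?_))
  constructor
  · intro hf
    intro b
    obtain ⟨a, ha⟩ := hf b
    exact ⟨Fintype.equivFin γ a, by simp [Equiv.arrowCongr_apply, ha]⟩
  · intro hf
    intro b
    obtain ⟨a, ha⟩ := hf b
    simp only [Equiv.arrowCongr_apply, Equiv.coe_refl, comp_apply, id_eq] at ha
    exact ⟨(Fintype.equivFin γ).symm a, ha⟩

theorem sigma_pi_eq {α : Type} [DecidableEq α] {s : Finset α} {P Q : Finpartition s}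
    (h : P = Q) (m : ∀ B ∈ P.parts, α) (m' : ∀ B ∈ Q.parts, α)
    (hm : ∀ B (hB : B ∈ P.parts) (hB' : B ∈ Q.parts), m B hB = m' B hB') :
    (⟨P, m⟩ : Σ P : Finpartition s, ∀ B ∈ P.parts, α) = ⟨Q, m'⟩ := by
  subst h
  exact congrArg (Sigma.mk P) (funext fun B => funext fun hB => hm B hB hB)

lemma mem_of_eq {α : Type} {s t : Finset α} {a : α} (h : s = t) (ha : a ∈ s) : a ∈ t :=
  h ▸ ha

section Mark

variable {N : ℕ}

/-- the marking function induced by a partition and a choice of element in each part -/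
def mark (P : Finpartition (univ : Finset (Fin N))) (m : ∀ B ∈ P.parts, Fin N) :
    Fin N → Fin N :=
  fun x => m (P.part x) (P.part_mem.mpr (mem_univ x))

lemma m_congr (P : Finpartition (univ : Finset (Fin N))) (m : ∀ B ∈ P.parts, Fin N)
    {B C : Finset (Fin N)} (hB : B ∈ P.parts) (hC : C ∈ P.parts) (h : B = C) :
    m B hB = m C hC := by subst h; rfl

lemma mark_mem_part {P : Finpartition (univ : Finset (Fin N))} {m : ∀ B ∈ P.parts, Fin N}
    (hm : ∀ B hB, m B hB ∈ B) (x : Fin N) : mark P m x ∈ P.part x := hm _ _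

lemma part_mark {P : Finpartition (univ : Finset (Fin N))} {m : ∀ B ∈ P.parts, Fin N}
    (hm : ∀ B hB, m B hB ∈ B) (x : Fin N) : P.part (mark P m x) = P.part x :=
  P.part_eq_of_mem (P.part_mem.mpr (mem_univ x)) (mark_mem_part hm x)

lemma mark_eq_iff {P : Finpartition (univ : Finset (Fin N))} {m : ∀ B ∈ P.parts, Fin N}
    (hm : ∀ B hB, m B hB ∈ B) (x y : Fin N) :
    mark P m x = mark P m y ↔ P.part x = P.part y := by
  constructor
  · intro h
    exact P.eq_of_mem_parts (P.part_mem.mpr (mem_univ x)) (P.part_mem.mpr (mem_univ y))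
      (mark_mem_part hm x) (h ▸ mark_mem_part hm y)
  · intro h
    exact m_congr P m _ _ h

end Mark

section Ker

variable {N : ℕ}

lemma mem_part_ker (r : Fin N → Fin N) (a b : Fin N) :
    b ∈ (Finpartition.ofSetoid (Setoid.ker r)).part a ↔ r a = r b :=
  Finpartition.mem_part_ofSetoid_iff_rel

lemma part_ker_eq (r : Fin N → Fin N) {x y : Fin N} (h : r x = r y) :
    (Finpartition.ofSetoid (Setoid.ker r)).part x
      = (Finpartition.ofSetoid (Setoid.ker r)).part y := by
  ext b; rw [mem_part_ker, mem_part_ker, h]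

/-- the canonical marking of the kernel partition of `r` -/
noncomputable def jmark (r : Fin N → Fin N) :
    ∀ B ∈ (Finpartition.ofSetoid (Setoid.ker r)).parts, Fin N :=
  fun _B hB => r ((Finpartition.nonempty_of_mem_parts _ hB).choose)

lemma jmark_mem {r : Fin N → Fin N} (hid : ∀ x, r (r x) = r x) :
    ∀ B hB, jmark r B hB ∈ B := by
  intro B hB
  have hc := (Finpartition.nonempty_of_mem_parts _ hB).choose_spec
  have h' := Finpartition.part_eq_of_mem _ hB hc
  have hmem : r ((Finpartition.nonempty_of_mem_parts _ hB).choose)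
      ∈ (Finpartition.ofSetoid (Setoid.ker r)).part
        ((Finpartition.nonempty_of_mem_parts _ hB).choose) :=
    (mem_part_ker r _ _).mpr (hid _).symm
  exact mem_of_eq h' hmem

lemma parts_ker_card {r : Fin N → Fin N} (hid : ∀ x, r (r x) = r x) :
    (Finpartition.ofSetoid (Setoid.ker r)).parts.card = (univ.image r).card := by
  refine card_bij (fun B hB => jmark r B hB) ?_ ?_ ?_
  · intro B hB
    exact mem_image_of_mem r (mem_univ _)
  · intro B₁ hB₁ B₂ hB₂ h
    have h1 := Finpartition.part_eq_of_mem _ hB₁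
      (Finpartition.nonempty_of_mem_parts _ hB₁).choose_spec
    have h2 := Finpartition.part_eq_of_mem _ hB₂
      (Finpartition.nonempty_of_mem_parts _ hB₂).choose_spec
    rw [← h1, ← h2]
    exact part_ker_eq r h
  · intro y hy
    obtain ⟨x, -, rfl⟩ := mem_image.mp hy
    have hpm := (Finpartition.ofSetoid (Setoid.ker r)).part_mem.mpr (mem_univ x)
    refine ⟨(Finpartition.ofSetoid (Setoid.ker r)).part x, hpm, ?_⟩
    have hc := (Finpartition.nonempty_of_mem_parts
        (Finpartition.ofSetoid (Setoid.ker r)) hpm).choose_spec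
    exact ((mem_part_ker r x _).mp hc).symm

lemma parts_ker_two {r : Fin N → Fin N} (hid : ∀ x, r (r x) = r x)
    (hfib : ∀ y, r y = y → ∃ x, x ≠ y ∧ r x = y) :
    ∀ B ∈ (Finpartition.ofSetoid (Setoid.ker r)).parts, 2 ≤ B.card := by
  intro B hB
  have hc := (Finpartition.nonempty_of_mem_parts _ hB).choose_spec
  set c := (Finpartition.nonempty_of_mem_parts _ hB).choose with hcdef
  have h' := Finpartition.part_eq_of_mem _ hB hc
  obtain ⟨x, hxy, hx⟩ := hfib (r c) (hid c)
  have hxB : x ∈ B := mem_of_eq h' ((mem_part_ker r c x).mpr hx.symm)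
  have hyB : r c ∈ B := mem_of_eq h' ((mem_part_ker r c (r c)).mpr (hid c).symm)
  exact Finset.one_lt_card.mpr ⟨x, hxB, r c, hyB, hxy⟩

end Ker

theorem enriched_ward_count (n k : ℕ) (hn : 1 ≤ n) (hk : 1 ≤ k) :
    ∑ P ∈ Finset.univ.filter
        (fun P : Finpartition (Finset.univ : Finset (Fin (n + k))) =>
          P.parts.card = k ∧ ∀ B ∈ P.parts, 2 ≤ B.card),
      ∏ B ∈ P.parts, B.card =
      Nat.factorial k * Nat.choose (n + k) k * stirling2 n k := by
  set F := Finset.univ.filter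
      (fun P : Finpartition (Finset.univ : Finset (Fin (n + k))) =>
        P.parts.card = k ∧ ∀ B ∈ P.parts, 2 ≤ B.card) with hFdef
  set R := Finset.univ.filter
      (fun r : Fin (n + k) → Fin (n + k) =>
        (∀ x, r (r x) = r x) ∧ (univ.image r).card = k
          ∧ ∀ y, r y = y → ∃ x, x ≠ y ∧ r x = y) with hRdef
  have hmemR : ∀ r : Fin (n + k) → Fin (n + k), r ∈ R ↔
      (∀ x, r (r x) = r x) ∧ (univ.image r).card = k
        ∧ ∀ y, r y = y → ∃ x, x ≠ y ∧ r x = y := by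
    intro r; rw [hRdef, mem_filter]; simp only [mem_univ, true_and]
  have hmemF : ∀ P : Finpartition (Finset.univ : Finset (Fin (n + k))), P ∈ F ↔
      P.parts.card = k ∧ ∀ B ∈ P.parts, 2 ≤ B.card := by
    intro P; rw [hFdef, mem_filter]; simp only [mem_univ, true_and]
  -- Step 1 : the weighted sum counts marked partitions
  have step1 : ∑ P ∈ F, ∏ B ∈ P.parts, B.card
      = (F.sigma (fun P => P.parts.pi (fun B => B))).card := by
    rw [Finset.card_sigma]
    exact Finset.sum_congr rfl (fun P _ => (Finset.card_pi _ _).symm)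
  -- Step 2 : marked partitions biject with good idempotent functions
  have step2 : (F.sigma (fun P => P.parts.pi (fun B => B))).card = R.card := by
    refine card_bij' (fun a _ha => mark a.1 a.2)
      (fun r _hr => ⟨Finpartition.ofSetoid (Setoid.ker r), jmark r⟩) ?_ ?_ ?_ ?_
    · rintro ⟨P, m⟩ ha
      obtain ⟨hF, hmm⟩ := mem_sigma.mp ha
      have hF2 := (hmemF P).mp hF
      have hm : ∀ B hB, m B hB ∈ B := mem_pi.mp hmm
      dsimp only
      rw [hmemR]
      refine ⟨?_, ?_, ?_⟩
      · intro x
        exact (mark_eq_iff hm _ _).mpr (part_mark hm x)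
      · refine (card_bij (fun y _hy => P.part y) ?_ ?_ ?_).trans hF2.1
        · intro y _hy
          exact P.part_mem.mpr (mem_univ y)
        · intro y₁ hy₁ y₂ hy₂ h
          obtain ⟨x₁, -, rfl⟩ := mem_image.mp hy₁
          obtain ⟨x₂, -, rfl⟩ := mem_image.mp hy₂
          rw [part_mark hm, part_mark hm] at h
          exact (mark_eq_iff hm _ _).mpr h
        · intro B hB
          obtain ⟨c, hc⟩ := P.nonempty_of_mem_parts hB
          exact ⟨mark P m c, mem_image_of_mem _ (mem_univ c),
            (part_mark hm c).trans (P.part_eq_of_mem hB hc)⟩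
      · intro y hy
        have h2 : 1 < (P.part y).card := hF2.2 _ (P.part_mem.mpr (mem_univ y))
        obtain ⟨x, hxB, hxy⟩ := Finset.exists_mem_ne h2 y
        refine ⟨x, hxy, ?_⟩
        rw [(mark_eq_iff hm _ _).mpr
          ((P.mem_part_iff_part_eq_part (mem_univ x) (mem_univ y)).mp hxB), hy]
    · intro r hr
      obtain ⟨hid, hcard, hfib⟩ := (hmemR r).mp hr
      refine mem_sigma.mpr ⟨?_, mem_pi.mpr (jmark_mem hid)⟩
      rw [hmemF]
      exact ⟨(parts_ker_card hid).trans hcard, parts_ker_two hid hfib⟩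
    · rintro ⟨P, m⟩ ha
      obtain ⟨hF, hmm⟩ := mem_sigma.mp ha
      have hm : ∀ B hB, m B hB ∈ B := mem_pi.mp hmm
      have key : ∀ x : Fin (n + k),
          (Finpartition.ofSetoid (Setoid.ker (mark P m))).part x = P.part x := by
        intro x
        ext b
        rw [mem_part_ker]
        constructor
        · intro h
          have hpp := (mark_eq_iff hm _ _).mp h
          rw [hpp]
          exact P.mem_part (mem_univ b)
        · intro hb
          exact (mark_eq_iff hm _ _).mpr
            ((P.mem_part_iff_part_eq_part (mem_univ b) (mem_univ x)).mp hb).symm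
      have hPP : Finpartition.ofSetoid (Setoid.ker (mark P m)) = P := by
        apply Finpartition.ext
        ext B
        constructor
        · intro hB
          obtain ⟨c, hc⟩ := Finpartition.nonempty_of_mem_parts _ hB
          have hBe := Finpartition.part_eq_of_mem _ hB hc
          rw [← hBe, key c]
          exact P.part_mem.mpr (mem_univ c)
        · intro hB
          obtain ⟨c, hc⟩ := P.nonempty_of_mem_parts hB
          have hBe := P.part_eq_of_mem hB hc
          rw [← hBe, ← key c]
          exact (Finpartition.part_mem _).mpr (mem_univ c)
      dsimp only
      refine sigma_pi_eq hPP (jmark (mark P m)) m ?_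
      intro B hB' hB
      have hc := (Finpartition.nonempty_of_mem_parts _ hB').choose_spec
      show mark P m ((Finpartition.nonempty_of_mem_parts _ hB').choose) = m B hB
      exact m_congr P m _ _ (P.part_eq_of_mem hB hc)
    · intro r hr
      obtain ⟨hid, hcard, hfib⟩ := (hmemR r).mp hr
      dsimp only
      funext x
      have hpm := (Finpartition.ofSetoid (Setoid.ker r)).part_mem.mpr (mem_univ x)
      have hc := (Finpartition.nonempty_of_mem_parts
          (Finpartition.ofSetoid (Setoid.ker r)) hpm).choose_spec
      show r ((Finpartition.nonempty_of_mem_parts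
          (Finpartition.ofSetoid (Setoid.ker r)) hpm).choose) = r x
      exact ((mem_part_ker r x _).mp hc).symm
  -- Step 3 : count good idempotents fiberwise over the image
  have step3 : R.card = ∑ T ∈ powersetCard k (univ : Finset (Fin (n + k))),
      (R.filter (fun r => univ.image r = T)).card := by
    refine card_eq_sum_card_fiberwise (fun r hr => ?_)
    exact mem_powersetCard.mpr ⟨subset_univ _, ((hmemR r).mp hr).2.1⟩
  -- Step 4 : each fiber is counted by surjections
  have step4 : ∀ T ∈ powersetCard k (univ : Finset (Fin (n + k))),
      (R.filter (fun r => univ.image r = T)).card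
        = Nat.factorial k * stirling2 n k := by
    intro T hT
    have hTcard : T.card = k := (mem_powersetCard.mp hT).2
    have hbij : (R.filter (fun r => univ.image r = T)).card
        = (univ.filter (Surjective :
            ({x : Fin (n + k) // x ∉ T} → {y : Fin (n + k) // y ∈ T}) → Prop)).card := by
      refine card_bij' (fun r hr => fun x =>
          (⟨r x.1, mem_of_eq (mem_filter.mp hr).2 (mem_image_of_mem r (mem_univ x.1))⟩
            : {y : Fin (n + k) // y ∈ T}))
        (fun f _hf => fun x => if h : x ∈ T then x else (f ⟨x, h⟩).1) ?_ ?_ ?_ ?_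
      · intro r hr
        obtain ⟨hrR, himgT⟩ := mem_filter.mp hr
        obtain ⟨hid, -, hfib⟩ := (hmemR r).mp hrR
        have fixT : ∀ y, y ∈ T → r y = y := by
          intro y hy
          rw [← himgT] at hy
          obtain ⟨x, -, rfl⟩ := mem_image.mp hy
          exact hid x
        refine mem_filter.mpr ⟨mem_univ _, ?_⟩
        rintro ⟨y, hyT⟩
        obtain ⟨x, hxy, hx⟩ := hfib y (fixT y hyT)
        have hxT : x ∉ T := by
          intro hxT
          exact hxy ((fixT x hxT).symm.trans hx)
        exact ⟨⟨x, hxT⟩, Subtype.ext hx⟩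
      · intro f hf
        have hfs : Surjective f := (mem_filter.mp hf).2
        have hmemT : ∀ x : Fin (n + k),
            (if h : x ∈ T then x else (f ⟨x, h⟩).1) ∈ T := by
          intro x
          by_cases h : x ∈ T
          · rw [dif_pos h]; exact h
          · rw [dif_neg h]; exact (f ⟨x, h⟩).2
        have himg : univ.image (fun x => if h : x ∈ T then x else (f ⟨x, h⟩).1) = T := by
          apply subset_antisymm
          · intro y hy
            obtain ⟨x, -, rfl⟩ := mem_image.mp hy
            exact hmemT x
          · intro y hy
            exact mem_image.mpr ⟨y, mem_univ _, dif_pos hy⟩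
        refine mem_filter.mpr ⟨?_, himg⟩
        rw [hmemR]
        refine ⟨?_, by rw [himg, hTcard], ?_⟩
        · intro x
          have hx := hmemT x
          rw [dif_pos hx]
        · intro y hy
          have hyT : y ∈ T := by rw [← hy]; exact hmemT y
          obtain ⟨⟨x, hxT⟩, hx⟩ := hfs ⟨y, hyT⟩
          refine ⟨x, fun h => hxT (h ▸ hyT), ?_⟩
          rw [dif_neg hxT, hx]
      · intro r hr
        obtain ⟨hrR, himgT⟩ := mem_filter.mp hr
        obtain ⟨hid, -, -⟩ := (hmemR r).mp hrR
        have fixT : ∀ y, y ∈ T → r y = y := by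
          intro y hy
          rw [← himgT] at hy
          obtain ⟨x, -, rfl⟩ := mem_image.mp hy
          exact hid x
        funext x
        dsimp only
        by_cases h : x ∈ T
        · rw [dif_pos h]
          exact (fixT x h).symm
        · rw [dif_neg h]
      · intro f _hf
        funext x
        refine Subtype.ext ?_
        show (if h : x.1 ∈ T then x.1 else (f ⟨x.1, h⟩).1) = (f x).1
        rw [dif_neg x.2]
    have hβ : Fintype.card {y : Fin (n + k) // y ∈ T} = k :=
      (Fintype.card_of_subtype T (fun x => Iff.rfl)).trans hTcard
    have hγ : Fintype.card {x : Fin (n + k) // x ∉ T} = n := by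
      have := Fintype.card_of_subtype (α := Fin (n + k)) Tᶜ (fun x => Finset.mem_compl)
      rw [this, Finset.card_compl, Fintype.card_fin, hTcard]
      omega
    calc (R.filter (fun r => univ.image r = T)).card
        = (univ.filter (Surjective :
            ({x : Fin (n + k) // x ∉ T} → {y : Fin (n + k) // y ∈ T}) → Prop)).card := hbij
      _ = Fintype.card {f : {x : Fin (n + k) // x ∉ T} → {y : Fin (n + k) // y ∈ T} //
            Surjective f} :=
          (Fintype.card_of_subtype _ (fun f => by simp)).symm
      _ = (Fintype.card {y : Fin (n + k) // y ∈ T}).factorial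
            * stirling2 (Fintype.card {x : Fin (n + k) // x ∉ T})
                (Fintype.card {y : Fin (n + k) // y ∈ T}) := card_surj _ _
      _ = Nat.factorial k * stirling2 n k := by rw [hβ, hγ]
  rw [step1, step2, step3, Finset.sum_congr rfl step4, Finset.sum_const,
    card_powersetCard, card_univ, Fintype.card_fin, smul_eq_mul]
  ring
end

section
/- For n ≥ 1, the signed count of increasing Schröder trees on n vertices, where a tree with k blocks carries sign (-1)^{n+k-1}, equals (n-1)!. -/
/-- An increasing Schröder tree on vertex set `{1, ..., n+1}` (represented as `Fin (n+1)`,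
with root `0`): a rooted tree whose labels increase away from the root, together with an
ordered set partition structure on the children of every vertex. -/
structure IncSchroederTree (n : ℕ) where
  /-- the parent of each non-root vertex -/
  par : Fin (n + 1) → Fin (n + 1)
  par_root : par 0 = 0
  par_lt : ∀ i : Fin (n + 1), i ≠ 0 → par i < i
  /-- the ordered sequence of blocks at each vertex -/
  blocks : Fin (n + 1) → List (Finset (Fin (n + 1)))
  blocks_nonempty : ∀ v, ∀ B ∈ blocks v, B.Nonempty
  blocks_disjoint : ∀ v, (blocks v).Pairwise Disjoint
  blocks_cover : ∀ v c, (∃ B ∈ blocks v, c ∈ B) ↔ (par c = v ∧ c ≠ 0)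

/-- The total number of blocks of an increasing Schröder tree. -/
def IncSchroederTree.numBlocks {n : ℕ} (t : IncSchroederTree n) : ℕ :=
  ∑ v : Fin (n + 1), (t.blocks v).length

/-- The number of increasing Schröder trees with `n+1` vertices and `k` blocks. -/
noncomputable def incSchroederCount (n k : ℕ) : ℕ :=
  Nat.card {t : IncSchroederTree n // t.numBlocks = k}

section ListHelper

variable {α : Type*} [DecidableEq α]

lemma pairwise_set_insert (l : List (Finset α)) (hl : l.Pairwise Disjoint) (j : ℕ)
    (hj : j < l.length) (x : α) (hx : ∀ B ∈ l, x ∉ B) :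
    (l.set j (insert x (l[j]'hj))).Pairwise Disjoint := by
  have hl' := List.pairwise_iff_getElem.mp hl
  rw [List.pairwise_iff_getElem]
  intro a b ha hb hab
  have ha' : a < l.length := by simpa using ha
  have hb' : b < l.length := by simpa using hb
  rw [List.getElem_set, List.getElem_set]
  split_ifs with h1 h2 h2
  · omega
  · exact Finset.disjoint_insert_left.mpr
      ⟨hx _ (List.getElem_mem hb'), h1 ▸ hl' a b ha' hb' hab⟩
  · exact Finset.disjoint_insert_right.mpr
      ⟨hx _ (List.getElem_mem ha'), h2 ▸ hl' a b ha' hb' hab⟩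
  · exact hl' a b ha' hb' hab

lemma insertIdx_eraseIdx_self (l : List α) (j : ℕ) (hj : j < l.length) :
    (l.eraseIdx j).insertIdx j (l[j]'hj) = l := by
  induction l generalizing j with
  | nil => simp at hj
  | cons a l ih =>
    cases j with
    | zero => simp
    | succ j =>
      rw [List.eraseIdx_cons_succ, List.insertIdx_succ_cons]
      simp only [List.getElem_cons_succ]
      rw [ih j (by simpa using hj)]

lemma insertIdx_injective (j : ℕ) (a : α) :
    ∀ (l₁ l₂ : List α), j ≤ l₁.length → j ≤ l₂.length →
      l₁.insertIdx j a = l₂.insertIdx j a → l₁ = l₂ := by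
  induction j with
  | zero => intro l₁ l₂ _ _ h; simpa using h
  | succ j ih =>
    intro l₁ l₂ h₁ h₂ h
    cases l₁ with
    | nil => simp at h₁
    | cons x l₁ =>
      cases l₂ with
      | nil => simp at h₂
      | cons y l₂ =>
        rw [List.insertIdx_succ_cons, List.insertIdx_succ_cons] at h
        injection h with h1 h2
        subst h1
        rw [ih l₁ l₂ (by simpa using h₁) (by simpa using h₂) h2]

end ListHelper

namespace IncSchroederTree

variable {n : ℕ}

lemma ext' {t₁ t₂ : IncSchroederTree n} (hp : t₁.par = t₂.par)
    (hb : t₁.blocks = t₂.blocks) : t₁ = t₂ := by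
  cases t₁; cases t₂; cases hp; cases hb; rfl

lemma par_le (t : IncSchroederTree n) (c : Fin (n + 1)) : t.par c ≤ c := by
  rcases eq_or_ne c 0 with rfl | hc
  · exact le_of_eq t.par_root
  · exact le_of_lt (t.par_lt c hc)

/-- uniqueness of the index of a block containing a given vertex -/
lemma index_eq (t : IncSchroederTree n) (v : Fin (n + 1)) {i j : ℕ}
    (hi : i < (t.blocks v).length) (hj : j < (t.blocks v).length)
    {c : Fin (n + 1)} (hci : c ∈ (t.blocks v)[i]) (hcj : c ∈ (t.blocks v)[j]) : i = j := by
  by_contra hne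
  have key : ∀ i j : ℕ, ∀ (hi : i < (t.blocks v).length) (hj : j < (t.blocks v).length),
      i < j → c ∈ (t.blocks v)[i] → c ∈ (t.blocks v)[j] → False := by
    intro i j hi hj hij h1 h2
    have := (List.pairwise_iff_getElem.mp (t.blocks_disjoint v)) i j hi hj hij
    exact Finset.disjoint_left.mp this h1 h2
  rcases lt_or_gt_of_ne hne with h | h
  · exact key i j hi hj h hci hcj
  · exact key j i hj hi h hcj hci

lemma numBlocks_le (t : IncSchroederTree n) : t.numBlocks ≤ n := by
  classical
  have hemp : ∀ (v : Fin (n+1)) (i : Fin ((t.blocks v).length)), ((t.blocks v).get i).Nonempty :=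
    fun v i => t.blocks_nonempty v _ (by simpa using List.getElem_mem i.isLt)
  set f : (Σ v : Fin (n + 1), Fin ((t.blocks v).length)) → {c : Fin (n + 1) // c ≠ 0} :=
    fun p => ⟨((t.blocks p.1).get p.2).min' (hemp p.1 p.2), by
      have hmem : ((t.blocks p.1).get p.2).min' (hemp p.1 p.2) ∈ (t.blocks p.1).get p.2 :=
        Finset.min'_mem _ _
      have : ∃ B ∈ t.blocks p.1, ((t.blocks p.1).get p.2).min' (hemp p.1 p.2) ∈ B :=
        ⟨_, by simpa using List.getElem_mem p.2.isLt, hmem⟩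
      exact ((t.blocks_cover p.1 _).mp this).2⟩ with hf
  have hinj : Function.Injective f := by
    rintro ⟨v, i⟩ ⟨w, j⟩ h
    have hval := congrArg Subtype.val h
    simp only [hf] at hval
    have hv : v = w := by
      have h1 : ∃ B ∈ t.blocks v, ((t.blocks v).get i).min' (hemp v i) ∈ B :=
        ⟨_, by simpa using List.getElem_mem i.isLt, Finset.min'_mem _ _⟩
      have h2 : ∃ B ∈ t.blocks w, ((t.blocks w).get j).min' (hemp w j) ∈ B :=
        ⟨_, by simpa using List.getElem_mem j.isLt, Finset.min'_mem _ _⟩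
      have e1 := ((t.blocks_cover v _).mp h1).1
      have e2 := ((t.blocks_cover w _).mp h2).1
      rw [← e1, ← e2, hval]
    subst hv
    have : (i : ℕ) = (j : ℕ) := by
      apply t.index_eq v i.isLt j.isLt (c := ((t.blocks v).get i).min' (hemp v i))
      · simpa using Finset.min'_mem _ _
      · rw [hval]; simpa using Finset.min'_mem _ _
    exact congrArg _ (Fin.ext this)
  have hcard := Fintype.card_le_of_injective f hinj
  have h1 : Fintype.card (Σ v : Fin (n + 1), Fin ((t.blocks v).length)) = t.numBlocks := by
    simp [Fintype.card_sigma, numBlocks]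
  have h2 : Fintype.card {c : Fin (n + 1) // c ≠ 0} = n := by
    simp [Fintype.card_subtype_compl]
  rw [h1, h2] at hcard
  exact hcard

lemma blocks_length_le (t : IncSchroederTree n) (v : Fin (n + 1)) :
    (t.blocks v).length ≤ n := by
  refine le_trans ?_ t.numBlocks_le
  exact Finset.single_le_sum (f := fun v => (t.blocks v).length) (fun _ _ => Nat.zero_le _)
    (Finset.mem_univ v)

instance : Finite (IncSchroederTree n) := by
  classical
  let F : IncSchroederTree n →
      (Fin (n + 1) → Fin (n + 1)) × (Fin (n + 1) → Fin (n + 1) → Option (Finset (Fin (n + 1)))) :=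
    fun t => (t.par, fun v i => (t.blocks v)[(i : ℕ)]?)
  have hF : Function.Injective F := by
    intro t₁ t₂ h
    have hp := congrArg Prod.fst h
    have hb := congrArg Prod.snd h
    simp only [F] at hp hb
    refine ext' hp ?_
    funext v
    apply List.ext_getElem?
    intro k
    by_cases hk : k < n + 1
    · exact congrFun (congrFun hb v) ⟨k, hk⟩
    · have h1 : (t₁.blocks v).length ≤ k := le_trans (le_trans (t₁.blocks_length_le v) (by omega)) (le_refl k)
      have h2 : (t₂.blocks v).length ≤ k := le_trans (le_trans (t₂.blocks_length_le v) (by omega)) (le_refl k)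
      rw [List.getElem?_eq_none h1, List.getElem?_eq_none h2]
  exact Finite.of_injective F hF

noncomputable instance : Fintype (IncSchroederTree n) := Fintype.ofFinite _

/-- For `n+1` vertices the last vertex has no children. -/
lemma blocks_last {m : ℕ} (t : IncSchroederTree (m + 1)) :
    t.blocks (Fin.last (m + 1)) = [] := by
  rw [List.eq_nil_iff_forall_not_mem]
  intro B hB
  obtain ⟨c, hc⟩ := t.blocks_nonempty _ B hB
  have := (t.blocks_cover (Fin.last (m+1)) c).mp ⟨B, hB, hc⟩
  have h1 : t.par c < c := t.par_lt c this.2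
  rw [this.1] at h1
  exact absurd h1 (not_lt.mpr (Fin.le_last c))

instance : Unique (IncSchroederTree 0) where
  default :=
    { par := fun _ => 0
      par_root := rfl
      par_lt := fun i hi => absurd (Fin.ext (Nat.lt_one_iff.mp i.isLt)) hi
      blocks := fun _ => []
      blocks_nonempty := fun _ B hB => absurd hB List.not_mem_nil
      blocks_disjoint := fun _ => List.Pairwise.nil
      blocks_cover := by
        intro v c
        constructor
        · rintro ⟨B, hB, -⟩; exact absurd hB List.not_mem_nil
        · rintro ⟨-, hc⟩; exact absurd (Fin.ext (Nat.lt_one_iff.mp c.isLt)) hc }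
  uniq := by
    intro t
    refine ext' ?_ ?_
    · funext i
      have hi : i = 0 := Fin.ext (by simpa using Nat.lt_one_iff.mp i.isLt)
      rw [hi, t.par_root]
    · funext v
      show t.blocks v = []
      rw [List.eq_nil_iff_forall_not_mem]
      intro B hB
      obtain ⟨c, hc⟩ := t.blocks_nonempty v B hB
      exact ((t.blocks_cover v c).mp ⟨B, hB, hc⟩).2 (Fin.ext (Nat.lt_one_iff.mp c.isLt))


section Insert

variable {m : ℕ}

/-- lift a block to the larger vertex set -/
def upF : Finset (Fin (m + 1)) → Finset (Fin (m + 2)) := Finset.map Fin.castSuccEmb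

lemma mem_upF {B : Finset (Fin (m + 1))} {c : Fin (m + 1)} :
    c.castSucc ∈ upF B ↔ c ∈ B := Finset.mem_map' _

lemma last_not_mem_upF (B : Finset (Fin (m + 1))) : Fin.last (m + 1) ∉ upF B := by
  intro h
  obtain ⟨c, -, hc⟩ := Finset.mem_map.mp h
  exact absurd hc (Fin.castSucc_lt_last c).ne

lemma upF_nonempty {B : Finset (Fin (m + 1))} (h : B.Nonempty) : (upF B).Nonempty :=
  Finset.Nonempty.map h

lemma upF_injective : Function.Injective (upF (m := m)) :=
  Finset.map_injective _

/-- the modified block list at the insertion vertex -/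
def insBlocks (t' : IncSchroederTree m) (v : Fin (m + 1))
    (pos : Fin ((t'.blocks v).length + 1) ⊕ Fin ((t'.blocks v).length)) :
    List (Finset (Fin (m + 2))) :=
  match pos with
  | .inl j => ((t'.blocks v).map upF).insertIdx j {Fin.last (m + 1)}
  | .inr j => ((t'.blocks v).map upF).set j
      (insert (Fin.last (m + 1)) (upF ((t'.blocks v).get j)))

/-- 1 if a new block is created, 0 otherwise -/
def posδ {t' : IncSchroederTree m} {v : Fin (m + 1)}
    (pos : Fin ((t'.blocks v).length + 1) ⊕ Fin ((t'.blocks v).length)) : ℕ :=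
  Sum.elim (fun _ => 1) (fun _ => 0) pos

lemma length_insBlocks (t' : IncSchroederTree m) (v : Fin (m + 1)) (pos) :
    (insBlocks t' v pos).length = (t'.blocks v).length + posδ pos := by
  rcases pos with j | j
  · have hj : (j : ℕ) ≤ ((t'.blocks v).map upF).length := by
      simpa using Nat.le_of_lt_succ j.isLt
    show (((t'.blocks v).map upF).insertIdx j {Fin.last (m + 1)}).length = _
    rw [List.length_insertIdx_of_le_length hj, List.length_map]
    simp [posδ]
  · simp [insBlocks, posδ]

lemma mem_insBlocks (t' : IncSchroederTree m) (v : Fin (m + 1)) (pos) (c : Fin (m + 2)) :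
    (∃ B ∈ insBlocks t' v pos, c ∈ B) ↔
      (c = Fin.last (m + 1) ∨ ∃ B ∈ t'.blocks v, c ∈ upF B) := by
  rcases pos with j | j
  · have hj : (j : ℕ) ≤ ((t'.blocks v).map upF).length := by
      simpa using Nat.le_of_lt_succ j.isLt
    constructor
    · rintro ⟨B, hB, hc⟩
      rcases (List.mem_insertIdx hj).mp hB with rfl | hB
      · exact Or.inl (Finset.mem_singleton.mp hc)
      · obtain ⟨B', hB', rfl⟩ := List.mem_map.mp hB
        exact Or.inr ⟨B', hB', hc⟩
    · rintro (rfl | ⟨B, hB, hc⟩)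
      · exact ⟨{Fin.last (m + 1)}, (List.mem_insertIdx hj).mpr (Or.inl rfl),
          Finset.mem_singleton_self _⟩
      · exact ⟨upF B, (List.mem_insertIdx hj).mpr (Or.inr (List.mem_map_of_mem hB)), hc⟩
  · have hjlt : (j : ℕ) < ((t'.blocks v).map upF).length := by simpa using j.isLt
    constructor
    · rintro ⟨B, hB, hc⟩
      rcases List.mem_or_eq_of_mem_set hB with hB | rfl
      · obtain ⟨B', hB', rfl⟩ := List.mem_map.mp hB
        exact Or.inr ⟨B', hB', hc⟩
      · rcases Finset.mem_insert.mp hc with rfl | hc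
        · exact Or.inl rfl
        · exact Or.inr ⟨(t'.blocks v).get j, by simpa using List.getElem_mem j.isLt, hc⟩
    · rintro (rfl | ⟨B, hB, hc⟩)
      · refine ⟨insert (Fin.last (m + 1)) (upF ((t'.blocks v).get j)), ?_,
          Finset.mem_insert_self _ _⟩
        rw [← List.getElem_set_self (l := (t'.blocks v).map upF) (i := (j : ℕ))
          (a := insert (Fin.last (m + 1)) (upF ((t'.blocks v).get j))) (by simpa using hjlt)]
        exact List.getElem_mem _
      · obtain ⟨i, hi, rfl⟩ := List.mem_iff_getElem.mp hB
        by_cases hij : (j : ℕ) = i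
        · subst hij
          refine ⟨insert (Fin.last (m + 1)) (upF ((t'.blocks v).get j)), ?_,
            Finset.mem_insert_of_mem (by simpa [List.get_eq_getElem] using hc)⟩
          rw [← List.getElem_set_self (l := (t'.blocks v).map upF) (i := (j : ℕ))
            (a := insert (Fin.last (m + 1)) (upF ((t'.blocks v).get j))) (by simpa using hjlt)]
          exact List.getElem_mem _
        · refine ⟨upF ((t'.blocks v)[i]), ?_, by simpa using hc⟩
          have hset : (((t'.blocks v).map upF).set j
              (insert (Fin.last (m + 1)) (upF ((t'.blocks v).get j))))[i]'(by simpa using hi) =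
              upF ((t'.blocks v)[i]) := by
            rw [List.getElem_set]
            simp [hij, List.getElem_map]
          rw [← hset]
          exact List.getElem_mem _

lemma nonempty_insBlocks (t' : IncSchroederTree m) (v : Fin (m + 1)) (pos) :
    ∀ B ∈ insBlocks t' v pos, B.Nonempty := by
  intro B hB
  rcases pos with j | j
  · have hj : (j : ℕ) ≤ ((t'.blocks v).map upF).length := by
      simpa using Nat.le_of_lt_succ j.isLt
    rcases (List.mem_insertIdx hj).mp hB with rfl | hB
    · exact ⟨_, Finset.mem_singleton_self _⟩
    · obtain ⟨B', hB', rfl⟩ := List.mem_map.mp hB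
      exact upF_nonempty (t'.blocks_nonempty v B' hB')
  · rcases List.mem_or_eq_of_mem_set hB with hB | rfl
    · obtain ⟨B', hB', rfl⟩ := List.mem_map.mp hB
      exact upF_nonempty (t'.blocks_nonempty v B' hB')
    · exact ⟨_, Finset.mem_insert_self _ _⟩

lemma pairwise_map_upF (t' : IncSchroederTree m) (w : Fin (m + 1)) :
    ((t'.blocks w).map upF).Pairwise Disjoint :=
  (t'.blocks_disjoint w).map upF (fun a b hab => (Finset.disjoint_map _).mpr hab)

lemma pairwise_insBlocks (t' : IncSchroederTree m) (v : Fin (m + 1)) (pos) :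
    (insBlocks t' v pos).Pairwise Disjoint := by
  rcases pos with j | j
  · have hj : (j : ℕ) ≤ ((t'.blocks v).map upF).length := by
      simpa using Nat.le_of_lt_succ j.isLt
    rw [show insBlocks t' v (Sum.inl j) =
      ((t'.blocks v).map upF).insertIdx j {Fin.last (m + 1)} from rfl,
      (List.perm_insertIdx _ _ hj).pairwise_iff (fun h => h.symm)]
    refine List.Pairwise.cons ?_ (pairwise_map_upF t' v)
    intro B hB
    obtain ⟨B', hB', rfl⟩ := List.mem_map.mp hB
    simpa only [Finset.disjoint_singleton_left] using last_not_mem_upF B'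
  · have hjlt : (j : ℕ) < ((t'.blocks v).map upF).length := by simpa using j.isLt
    have hnew : insert (Fin.last (m + 1)) (upF ((t'.blocks v).get j)) =
        insert (Fin.last (m + 1)) ((((t'.blocks v).map upF))[(j : ℕ)]'hjlt) := by
      simp [List.getElem_map]
    show (((t'.blocks v).map upF).set j _).Pairwise Disjoint
    rw [hnew]
    refine pairwise_set_insert _ (pairwise_map_upF t' v) _ hjlt _ ?_
    intro B hB
    obtain ⟨B', hB', rfl⟩ := List.mem_map.mp hB
    exact last_not_mem_upF B'

/-- Insert the new maximal vertex into a tree. -/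
def insTree (t' : IncSchroederTree m) (v : Fin (m + 1))
    (pos : Fin ((t'.blocks v).length + 1) ⊕ Fin ((t'.blocks v).length)) :
    IncSchroederTree (m + 1) where
  par c := if h : c = Fin.last (m + 1) then v.castSucc else (t'.par (c.castPred h)).castSucc
  par_root := by
    rw [dif_neg (by simp [Fin.ext_iff]), Fin.castPred_zero, t'.par_root, Fin.castSucc_zero]
  par_lt := by
    intro c hc
    by_cases h : c = Fin.last (m + 1)
    · subst h; rw [dif_pos rfl]; exact Fin.castSucc_lt_last v
    · rw [dif_neg h]
      have h1 : c.castPred h ≠ 0 := by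
        exact fun h0 => hc (by rw [← Fin.castSucc_castPred c h, h0, Fin.castSucc_zero])
      have := t'.par_lt _ h1
      rw [Fin.lt_def] at this ⊢
      simpa [Fin.coe_castPred] using this
  blocks w :=
    if h : w = Fin.last (m + 1) then []
    else if w.castPred h = v then insBlocks t' v pos
    else (t'.blocks (w.castPred h)).map upF
  blocks_nonempty := by
    intro w B hB
    by_cases h : w = Fin.last (m + 1)
    · rw [dif_pos h] at hB; exact absurd hB List.not_mem_nil
    · rw [dif_neg h] at hB
      by_cases h2 : w.castPred h = v
      · rw [if_pos h2] at hB; exact nonempty_insBlocks t' v pos B hB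
      · rw [if_neg h2] at hB
        obtain ⟨B', hB', rfl⟩ := List.mem_map.mp hB
        exact upF_nonempty (t'.blocks_nonempty _ B' hB')
  blocks_disjoint := by
    intro w
    by_cases h : w = Fin.last (m + 1)
    · rw [dif_pos h]; exact List.Pairwise.nil
    · rw [dif_neg h]
      by_cases h2 : w.castPred h = v
      · rw [if_pos h2]; exact pairwise_insBlocks t' v pos
      · rw [if_neg h2]; exact pairwise_map_upF t' _
  blocks_cover := by
    intro w c
    by_cases hc : c = Fin.last (m + 1)
    · subst hc
      rw [dif_pos rfl]
      by_cases h : w = Fin.last (m + 1)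
      · subst h
        simp only [dif_pos rfl]
        constructor
        · rintro ⟨B, hB, -⟩; exact absurd hB List.not_mem_nil
        · rintro ⟨hp, -⟩
          exact absurd hp.symm (Fin.castSucc_lt_last v).ne'
      · rw [dif_neg h]
        by_cases h2 : w.castPred h = v
        · rw [if_pos h2]
          constructor
          · rintro -
            refine ⟨?_, by simp [Fin.ext_iff]⟩
            rw [← h2, Fin.castSucc_castPred]
          · rintro -
            exact (mem_insBlocks t' v pos _).mpr (Or.inl rfl)
        · rw [if_neg h2]
          constructor
          · rintro ⟨B, hB, hc⟩
            obtain ⟨B', hB', rfl⟩ := List.mem_map.mp hB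
            exact absurd hc (last_not_mem_upF B')
          · rintro ⟨hp, -⟩
            exfalso
            apply h2
            rw [← Fin.castSucc_castPred w h] at hp
            exact (Fin.castSucc_injective _ hp).symm
    · obtain ⟨c', rfl⟩ := Fin.exists_castSucc_eq.mpr hc
      rw [dif_neg hc]
      have hc0 : c'.castSucc = 0 ↔ c' = 0 := Fin.castSucc_eq_zero_iff
      have hpar : (t'.par ((c'.castSucc).castPred hc)).castSucc = (t'.par c').castSucc := by
        rw [Fin.castPred_castSucc]
      by_cases h : w = Fin.last (m + 1)
      · subst h
        rw [dif_pos rfl]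
        constructor
        · rintro ⟨B, hB, -⟩; exact absurd hB List.not_mem_nil
        · rintro ⟨hp, -⟩
          rw [hpar] at hp
          exact absurd hp (Fin.castSucc_lt_last _).ne
      · rw [dif_neg h]
        obtain ⟨w', rfl⟩ := Fin.exists_castSucc_eq.mpr h
        have hw' : (w'.castSucc).castPred h = w' := Fin.castPred_castSucc _
        rw [hw']
        have hmem : (∃ B ∈ t'.blocks w', c' ∈ B) ↔ (t'.par c' = w' ∧ c' ≠ 0) :=
          t'.blocks_cover w' c'
        have hru : (t'.par c').castSucc = w'.castSucc ↔ t'.par c' = w' :=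
          ⟨fun hh => Fin.castSucc_injective _ hh, fun hh => by rw [hh]⟩
        by_cases h2 : w' = v
        · subst h2
          rw [if_pos rfl]
          rw [mem_insBlocks t' w' pos]
          constructor
          · rintro (habs | ⟨B, hB, hcb⟩)
            · exact absurd habs hc
            · have := hmem.mp ⟨B, hB, mem_upF.mp hcb⟩
              refine ⟨?_, Fin.castSucc_ne_zero_iff.mpr this.2⟩
              rw [hpar, hru]
              exact this.1
          · rintro ⟨hp, hne⟩
            rw [hpar, hru] at hp
            obtain ⟨B, hB, hcb⟩ := hmem.mpr ⟨hp, fun hz => hne (by simp [hz])⟩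
            exact Or.inr ⟨B, hB, mem_upF.mpr hcb⟩
        · rw [if_neg h2]
          constructor
          · rintro ⟨B, hB, hcb⟩
            obtain ⟨B', hB', rfl⟩ := List.mem_map.mp hB
            have := hmem.mp ⟨B', hB', mem_upF.mp hcb⟩
            refine ⟨?_, Fin.castSucc_ne_zero_iff.mpr this.2⟩
            rw [hpar, hru]
            exact this.1
          · rintro ⟨hp, hne⟩
            rw [hpar, hru] at hp
            obtain ⟨B, hB, hcb⟩ := hmem.mpr ⟨hp, fun hz => hne (by simp [hz])⟩
            exact ⟨upF B, List.mem_map_of_mem hB, mem_upF.mpr hcb⟩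

lemma insTree_blocks_last (t' : IncSchroederTree m) (v : Fin (m + 1)) (pos) :
    (insTree t' v pos).blocks (Fin.last (m + 1)) = [] := by
  simp [insTree]

lemma insTree_blocks_castSucc (t' : IncSchroederTree m) (v : Fin (m + 1)) (pos)
    (w : Fin (m + 1)) :
    (insTree t' v pos).blocks w.castSucc =
      if w = v then insBlocks t' v pos else (t'.blocks w).map upF := by
  simp only [insTree]
  rw [dif_neg (Fin.castSucc_lt_last w).ne, Fin.castPred_castSucc]

lemma insTree_par_last (t' : IncSchroederTree m) (v : Fin (m + 1)) (pos) :
    (insTree t' v pos).par (Fin.last (m + 1)) = v.castSucc := by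
  simp [insTree]

lemma insTree_par_castSucc (t' : IncSchroederTree m) (v : Fin (m + 1)) (pos)
    (c : Fin (m + 1)) :
    (insTree t' v pos).par c.castSucc = (t'.par c).castSucc := by
  simp only [insTree]
  rw [dif_neg (Fin.castSucc_lt_last c).ne, Fin.castPred_castSucc]

lemma numBlocks_insTree (t' : IncSchroederTree m) (v : Fin (m + 1)) (pos) :
    (insTree t' v pos).numBlocks = t'.numBlocks + posδ pos := by
  unfold numBlocks
  rw [Fin.sum_univ_castSucc]
  rw [insTree_blocks_last]
  simp only [List.length_nil, add_zero]
  have hterm : ∀ w : Fin (m + 1), ((insTree t' v pos).blocks w.castSucc).length =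
      (t'.blocks w).length + (if w = v then posδ pos else 0) := by
    intro w
    rw [insTree_blocks_castSucc]
    by_cases h : w = v
    · subst h; rw [if_pos rfl, if_pos rfl, length_insBlocks]
    · rw [if_neg h, if_neg h, List.length_map, add_zero]
  rw [Finset.sum_congr rfl (fun w _ => hterm w), Finset.sum_add_distrib]
  congr 1
  simp

end Insert

section Inj

variable {m : ℕ}

lemma getElem_idx_congr {α : Type*} (l : List α) {i j : ℕ} (h : i = j) (hi : i < l.length) :
    l[i]'hi = l[j]'(h ▸ hi) := by subst h; rfl

lemma index_eq_of_pairwise_disjoint {α : Type*} {l : List (Finset α)}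
    (hl : l.Pairwise Disjoint) {i j : ℕ} (hi : i < l.length) (hj : j < l.length)
    {c : α} (hci : c ∈ l[i]) (hcj : c ∈ l[j]) : i = j := by
  by_contra hne
  have key : ∀ i j : ℕ, ∀ (hi : i < l.length) (hj : j < l.length),
      i < j → c ∈ l[i] → c ∈ l[j] → False := by
    intro i j hi hj hij h1 h2
    exact Finset.disjoint_left.mp (List.pairwise_iff_getElem.mp hl i j hi hj hij) h1 h2
  rcases lt_or_gt_of_ne hne with hlt | hlt
  · exact key i j hi hj hlt hci hcj
  · exact key j i hj hi hlt hcj hci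

lemma insBlocks_inl (t' : IncSchroederTree m) (v : Fin (m + 1))
    (j : Fin ((t'.blocks v).length + 1)) :
    insBlocks t' v (Sum.inl j) = ((t'.blocks v).map upF).insertIdx j {Fin.last (m + 1)} := rfl

lemma insBlocks_inr (t' : IncSchroederTree m) (v : Fin (m + 1))
    (j : Fin ((t'.blocks v).length)) :
    insBlocks t' v (Sum.inr j) = ((t'.blocks v).map upF).set j
      (insert (Fin.last (m + 1)) (upF ((t'.blocks v).get j))) := rfl

/-- the index (in the list of blocks) affected by the insertion -/
def posIdx {t' : IncSchroederTree m} {v : Fin (m + 1)}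
    (pos : Fin ((t'.blocks v).length + 1) ⊕ Fin ((t'.blocks v).length)) : ℕ :=
  match pos with
  | .inl j => j
  | .inr j => j

@[simp] lemma posIdx_inl {t' : IncSchroederTree m} {v : Fin (m + 1)}
    (j : Fin ((t'.blocks v).length + 1)) : posIdx (Sum.inl j) = (j : ℕ) := rfl

@[simp] lemma posIdx_inr {t' : IncSchroederTree m} {v : Fin (m + 1)}
    (j : Fin ((t'.blocks v).length)) : posIdx (Sum.inr j) = (j : ℕ) := rfl

lemma getElem_insBlocks_inl (t' : IncSchroederTree m) (v : Fin (m + 1))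
    (j : Fin ((t'.blocks v).length + 1)) (h : posIdx (Sum.inl j) < (insBlocks t' v (Sum.inl j)).length) :
    (insBlocks t' v (Sum.inl j))[posIdx (Sum.inl j)]'h = {Fin.last (m + 1)} := by
  simp only [posIdx_inl, insBlocks_inl]
  exact List.getElem_insertIdx_self _

lemma getElem_insBlocks_inr (t' : IncSchroederTree m) (v : Fin (m + 1))
    (j : Fin ((t'.blocks v).length)) (h : posIdx (Sum.inr j) < (insBlocks t' v (Sum.inr j)).length) :
    (insBlocks t' v (Sum.inr j))[posIdx (Sum.inr j)]'h =
      insert (Fin.last (m + 1)) (upF ((t'.blocks v).get j)) := by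
  simp only [posIdx_inr, insBlocks_inr]
  exact List.getElem_set_self _

lemma last_mem_insBlocks_idx (t' : IncSchroederTree m) (v : Fin (m + 1)) (pos) :
    ∃ h : posIdx pos < (insBlocks t' v pos).length,
      Fin.last (m + 1) ∈ (insBlocks t' v pos)[posIdx pos] := by
  rcases pos with j | j
  · have hj : (j : ℕ) ≤ ((t'.blocks v).map upF).length := by
      simpa using Nat.le_of_lt_succ j.isLt
    have hlen : (insBlocks t' v (Sum.inl j)).length = (t'.blocks v).length + 1 := by
      rw [insBlocks_inl, List.length_insertIdx_of_le_length hj, List.length_map]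
    have hlt : posIdx (Sum.inl j) < (insBlocks t' v (Sum.inl j)).length := by
      rw [hlen, posIdx_inl]; exact j.isLt
    refine ⟨hlt, ?_⟩
    rw [getElem_insBlocks_inl t' v j hlt]
    exact Finset.mem_singleton_self _
  · have hlen : (insBlocks t' v (Sum.inr j)).length = (t'.blocks v).length := by
      rw [insBlocks_inr, List.length_set, List.length_map]
    have hlt : posIdx (Sum.inr j) < (insBlocks t' v (Sum.inr j)).length := by
      rw [hlen, posIdx_inr]; exact j.isLt
    refine ⟨hlt, ?_⟩
    rw [getElem_insBlocks_inr t' v j hlt]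
    exact Finset.mem_insert_self _ _

lemma insTree_injective :
    Function.Injective (fun x : Σ t' : IncSchroederTree m, Σ v : Fin (m + 1),
        Fin ((t'.blocks v).length + 1) ⊕ Fin ((t'.blocks v).length) =>
      insTree x.1 x.2.1 x.2.2) := by
  rintro ⟨t₁, v₁, p₁⟩ ⟨t₂, v₂, p₂⟩ h
  dsimp only at h
  have hv : v₁ = v₂ := by
    apply Fin.castSucc_injective
    rw [← insTree_par_last t₁ v₁ p₁, h, insTree_par_last]
  subst hv
  have hpar : t₁.par = t₂.par := by
    funext c
    apply Fin.castSucc_injective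
    rw [← insTree_par_castSucc t₁ v₁ p₁ c, h, insTree_par_castSucc]
  have hbl : ∀ w : Fin (m + 1), w ≠ v₁ → t₁.blocks w = t₂.blocks w := by
    intro w hw
    have h1 := insTree_blocks_castSucc t₁ v₁ p₁ w
    have h2 := insTree_blocks_castSucc t₂ v₁ p₂ w
    rw [if_neg hw] at h1 h2
    have : (t₁.blocks w).map upF = (t₂.blocks w).map upF := by rw [← h1, h, h2]
    exact List.map_injective_iff.mpr upF_injective this
  have hins : insBlocks t₁ v₁ p₁ = insBlocks t₂ v₁ p₂ := by
    have h1 := insTree_blocks_castSucc t₁ v₁ p₁ v₁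
    have h2 := insTree_blocks_castSucc t₂ v₁ p₂ v₁
    rw [if_pos rfl] at h1 h2
    rw [← h1, h, h2]
  obtain ⟨hi₁, hm₁⟩ := last_mem_insBlocks_idx t₁ v₁ p₁
  obtain ⟨hi₂, hm₂⟩ := last_mem_insBlocks_idx t₂ v₁ p₂
  have hi₁' : posIdx p₁ < (insBlocks t₂ v₁ p₂).length := hins ▸ hi₁
  have hm₁' : Fin.last (m + 1) ∈ (insBlocks t₂ v₁ p₂)[posIdx p₁]'hi₁' := by
    rw [← List.getElem_of_eq hins hi₁]
    exact hm₁
  have hidx : posIdx p₁ = posIdx p₂ :=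
    index_eq_of_pairwise_disjoint (pairwise_insBlocks t₂ v₁ p₂) hi₁' hi₂ hm₁' hm₂
  have key : (insBlocks t₁ v₁ p₁)[posIdx p₁]'hi₁ = (insBlocks t₂ v₁ p₂)[posIdx p₂]'hi₂ := by
    rw [List.getElem_of_eq hins hi₁]
    exact getElem_idx_congr _ hidx _
  rcases p₁ with j₁ | j₁ <;> rcases p₂ with j₂ | j₂
  · -- both new blocks
    simp only [posIdx_inl] at hidx
    have hj : (j₁ : ℕ) ≤ ((t₁.blocks v₁).map upF).length := by
      simpa using Nat.le_of_lt_succ j₁.isLt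
    have hj' : (j₂ : ℕ) ≤ ((t₂.blocks v₁).map upF).length := by
      simpa using Nat.le_of_lt_succ j₂.isLt
    rw [insBlocks_inl, insBlocks_inl] at hins
    rw [← hidx] at hins
    have hLeq : (t₁.blocks v₁).map upF = (t₂.blocks v₁).map upF :=
      insertIdx_injective _ _ _ _ hj (hidx ▸ hj') hins
    have hbv : t₁.blocks v₁ = t₂.blocks v₁ := List.map_injective_iff.mpr upF_injective hLeq
    have ht : t₁ = t₂ := IncSchroederTree.ext' hpar (funext fun w => by
      by_cases hw : w = v₁
      · subst hw; exact hbv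
      · exact hbl w hw)
    subst ht
    have : j₁ = j₂ := Fin.ext hidx
    subst this
    rfl
  · -- inl vs inr : impossible
    exfalso
    rw [getElem_insBlocks_inl t₁ v₁ j₁ hi₁, getElem_insBlocks_inr t₂ v₁ j₂ hi₂] at key
    have hmem2 : (t₂.blocks v₁).get j₂ ∈ t₂.blocks v₁ := by
      simpa using List.getElem_mem j₂.isLt
    obtain ⟨x, hx⟩ := upF_nonempty (t₂.blocks_nonempty v₁ _ hmem2)
    have hxm : x ∈ ({Fin.last (m + 1)} : Finset (Fin (m + 2))) := by
      rw [key]; exact Finset.mem_insert_of_mem hx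
    have hxlast : x = Fin.last (m + 1) := Finset.mem_singleton.mp hxm
    exact last_not_mem_upF _ (hxlast ▸ hx)
  · -- inr vs inl : impossible
    exfalso
    rw [getElem_insBlocks_inr t₁ v₁ j₁ hi₁, getElem_insBlocks_inl t₂ v₁ j₂ hi₂] at key
    have hmem1 : (t₁.blocks v₁).get j₁ ∈ t₁.blocks v₁ := by
      simpa using List.getElem_mem j₁.isLt
    obtain ⟨x, hx⟩ := upF_nonempty (t₁.blocks_nonempty v₁ _ hmem1)
    have hxm : x ∈ ({Fin.last (m + 1)} : Finset (Fin (m + 2))) := by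
      rw [← key]; exact Finset.mem_insert_of_mem hx
    have hxlast : x = Fin.last (m + 1) := Finset.mem_singleton.mp hxm
    exact last_not_mem_upF _ (hxlast ▸ hx)
  · -- both joins
    simp only [posIdx_inr] at hidx
    rw [getElem_insBlocks_inr t₁ v₁ j₁ hi₁, getElem_insBlocks_inr t₂ v₁ j₂ hi₂] at key
    have hupf : upF ((t₁.blocks v₁).get j₁) = upF ((t₂.blocks v₁).get j₂) := by
      rw [← Finset.erase_insert (last_not_mem_upF ((t₁.blocks v₁).get j₁)),
          ← Finset.erase_insert (last_not_mem_upF ((t₂.blocks v₁).get j₂)), key]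
    rw [insBlocks_inr, insBlocks_inr] at hins
    have hlen : (t₁.blocks v₁).length = (t₂.blocks v₁).length := by
      have := congrArg List.length hins
      simpa using this
    have hLeq : (t₁.blocks v₁).map upF = (t₂.blocks v₁).map upF := by
      apply List.ext_getElem (by simpa using hlen)
      intro i ih₁ ih₂
      have hs₁ : i < (((t₁.blocks v₁).map upF).set j₁
          (insert (Fin.last (m+1)) (upF ((t₁.blocks v₁).get j₁)))).length := by
        simpa using ih₁
      have hgeq : (((t₁.blocks v₁).map upF).set j₁
            (insert (Fin.last (m+1)) (upF ((t₁.blocks v₁).get j₁))))[i]'hs₁ =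
          (((t₂.blocks v₁).map upF).set j₂
            (insert (Fin.last (m+1)) (upF ((t₂.blocks v₁).get j₂))))[i]'(by
              simpa using ih₂) :=
        List.getElem_of_eq hins hs₁
      rw [List.getElem_set, List.getElem_set] at hgeq
      by_cases hij : (j₁ : ℕ) = i
      · rw [List.getElem_map, List.getElem_map]
        have e1 : ((t₁.blocks v₁).map upF)[i]'ih₁ = upF ((t₁.blocks v₁)[i]'(by simpa using ih₁)) :=
          List.getElem_map _
        have h1 : upF ((t₁.blocks v₁)[i]'(by simpa using ih₁)) = upF ((t₁.blocks v₁).get j₁) := by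
          congr 1
          simp [List.get_eq_getElem, ← hij]
        have h2 : upF ((t₂.blocks v₁)[i]'(by simpa using ih₂)) = upF ((t₂.blocks v₁).get j₂) := by
          congr 1
          simp [List.get_eq_getElem, ← hidx, ← hij]
        rw [h1, h2, hupf]
      · rw [if_neg hij, if_neg (by rw [← hidx]; exact hij)] at hgeq
        exact hgeq
    have hbv : t₁.blocks v₁ = t₂.blocks v₁ := List.map_injective_iff.mpr upF_injective hLeq
    have ht : t₁ = t₂ := IncSchroederTree.ext' hpar (funext fun w => by
      by_cases hw : w = v₁
      · subst hw; exact hbv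
      · exact hbl w hw)
    subst ht
    have : j₁ = j₂ := Fin.ext hidx
    subst this
    rfl

end Inj

section Surj

variable {m : ℕ}

/-- project a block (minus the last vertex) down to the smaller vertex set -/
def downF (B : Finset (Fin (m + 2))) : Finset (Fin (m + 1)) :=
  (B.erase (Fin.last (m + 1))).image
    (fun (c : Fin (m + 2)) => if h : (c : ℕ) < m + 1 then (⟨c, h⟩ : Fin (m + 1)) else 0)

lemma upF_downF (B : Finset (Fin (m + 2))) : upF (downF B) = B.erase (Fin.last (m + 1)) := by
  ext c
  simp only [upF, downF, Finset.mem_map, Finset.mem_image]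
  constructor
  · rintro ⟨a, ⟨b, hb, rfl⟩, rfl⟩
    have hbne : b ≠ Fin.last (m + 1) := (Finset.mem_erase.mp hb).1
    have hblt : (b : ℕ) < m + 1 := by
      have := b.isLt
      rcases Nat.lt_or_ge (b : ℕ) (m + 1) with h | h
      · exact h
      · exact absurd (Fin.ext (by rw [Fin.val_last]; omega)) hbne
    rw [dif_pos hblt]
    have : (Fin.castSuccEmb (⟨(b : ℕ), hblt⟩ : Fin (m + 1))) = b := by
      simp [Fin.ext_iff]
    rw [this]
    exact hb
  · intro hc
    have hcne : c ≠ Fin.last (m + 1) := (Finset.mem_erase.mp hc).1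
    have hclt : (c : ℕ) < m + 1 := by
      have := c.isLt
      rcases Nat.lt_or_ge (c : ℕ) (m + 1) with h | h
      · exact h
      · exact absurd (Fin.ext (by rw [Fin.val_last]; omega)) hcne
    refine ⟨⟨(c : ℕ), hclt⟩, ⟨c, hc, dif_pos hclt⟩, by simp [Fin.ext_iff]⟩

lemma mem_downF {B : Finset (Fin (m + 2))} {c' : Fin (m + 1)} :
    c' ∈ downF B ↔ c'.castSucc ∈ B := by
  rw [← mem_upF, upF_downF, Finset.mem_erase]
  simp [(Fin.castSucc_lt_last c').ne]

lemma downF_disjoint {B₁ B₂ : Finset (Fin (m + 2))} (h : Disjoint B₁ B₂) :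
    Disjoint (downF B₁) (downF B₂) := by
  rw [← Finset.disjoint_map Fin.castSuccEmb]
  show Disjoint (upF (downF B₁)) (upF (downF B₂))
  rw [upF_downF, upF_downF]
  exact h.mono (Finset.erase_subset _ _) (Finset.erase_subset _ _)

lemma downF_nonempty {B : Finset (Fin (m + 2))} (hB : B.Nonempty)
    (hM : Fin.last (m + 1) ∉ B) : (downF B).Nonempty := by
  obtain ⟨x, hx⟩ := hB
  have hxne : x ≠ Fin.last (m + 1) := fun h => hM (h ▸ hx)
  obtain ⟨x', rfl⟩ := Fin.exists_castSucc_eq.mpr hxne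
  exact ⟨x', mem_downF.mpr hx⟩

lemma downF_nonempty' {B : Finset (Fin (m + 2))} (hB : B.Nonempty)
    (hne : B ≠ {Fin.last (m + 1)}) : (downF B).Nonempty := by
  have hx : ∃ x ∈ B, x ≠ Fin.last (m + 1) := by
    by_contra hcon
    push_neg at hcon
    apply hne
    obtain ⟨y, hy⟩ := hB
    have hyl := hcon y hy
    subst hyl
    ext z
    simp only [Finset.mem_singleton]
    exact ⟨fun hz => hcon z hz, fun hz => hz ▸ hy⟩
  obtain ⟨x, hx, hxne⟩ := hx
  obtain ⟨x', rfl⟩ := Fin.exists_castSucc_eq.mpr hxne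
  exact ⟨x', mem_downF.mpr hx⟩

lemma upF_downF_of_not_mem {B : Finset (Fin (m + 2))} (hM : Fin.last (m + 1) ∉ B) :
    upF (downF B) = B := by
  rw [upF_downF]
  exact Finset.erase_eq_of_notMem hM

lemma mem_map_downF {l : List (Finset (Fin (m + 2)))} {c' : Fin (m + 1)} :
    (∃ B' ∈ l.map downF, c' ∈ B') ↔ (∃ B ∈ l, c'.castSucc ∈ B) := by
  constructor
  · rintro ⟨B', hB', hc⟩
    obtain ⟨B, hB, rfl⟩ := List.mem_map.mp hB'
    exact ⟨B, hB, mem_downF.mp hc⟩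
  · rintro ⟨B, hB, hc⟩
    exact ⟨downF B, List.mem_map_of_mem hB, mem_downF.mpr hc⟩

/-- the parent function after deleting the last vertex -/
def delPar (t : IncSchroederTree (m + 1)) (c' : Fin (m + 1)) : Fin (m + 1) :=
  (t.par c'.castSucc).castPred
    (lt_of_le_of_lt (t.par_le _) (Fin.castSucc_lt_last c')).ne

lemma castSucc_delPar (t : IncSchroederTree (m + 1)) (c' : Fin (m + 1)) :
    (delPar t c').castSucc = t.par c'.castSucc := Fin.castSucc_castPred _ _

lemma delPar_root (t : IncSchroederTree (m + 1)) : delPar t 0 = 0 := by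
  apply Fin.castSucc_injective
  rw [castSucc_delPar, Fin.castSucc_zero, t.par_root]

lemma delPar_lt (t : IncSchroederTree (m + 1)) :
    ∀ c' : Fin (m + 1), c' ≠ 0 → delPar t c' < c' := by
  intro c' hc
  have h1 : t.par c'.castSucc < c'.castSucc :=
    t.par_lt _ (Fin.castSucc_ne_zero_iff.mpr hc)
  rw [Fin.lt_def] at h1 ⊢
  simpa [delPar, Fin.coe_castPred] using h1

lemma delPar_eq_iff (t : IncSchroederTree (m + 1)) (c' w' : Fin (m + 1)) :
    delPar t c' = w' ↔ t.par c'.castSucc = w'.castSucc := by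
  constructor
  · intro h; rw [← castSucc_delPar, h]
  · intro h
    apply Fin.castSucc_injective
    rw [castSucc_delPar, h]

lemma cover_castSucc (t : IncSchroederTree (m + 1)) (w' c' : Fin (m + 1)) :
    (∃ B ∈ t.blocks w'.castSucc, c'.castSucc ∈ B) ↔ (delPar t c' = w' ∧ c' ≠ 0) := by
  rw [t.blocks_cover w'.castSucc c'.castSucc, delPar_eq_iff]
  simp only [ne_eq, Fin.castSucc_eq_zero_iff]

/-- the tree obtained by deleting the last vertex, when its block disappears -/
def delTreeA (t : IncSchroederTree (m + 1)) (v : Fin (m + 1)) (jM : ℕ)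
    (hne : ∀ w' : Fin (m + 1),
      ∀ B ∈ (if w' = v then (t.blocks v.castSucc).eraseIdx jM else t.blocks w'.castSucc),
        (downF B).Nonempty)
    (hcov : ∀ c' : Fin (m + 1),
      (∃ B ∈ (t.blocks v.castSucc).eraseIdx jM, c'.castSucc ∈ B) ↔
        (∃ B ∈ t.blocks v.castSucc, c'.castSucc ∈ B)) :
    IncSchroederTree m where
  par := delPar t
  par_root := delPar_root t
  par_lt := delPar_lt t
  blocks w' :=
    (if w' = v then (t.blocks v.castSucc).eraseIdx jM else t.blocks w'.castSucc).map downF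
  blocks_nonempty := by
    intro w' B' hB'
    obtain ⟨B, hB, rfl⟩ := List.mem_map.mp hB'
    exact hne w' B hB
  blocks_disjoint := by
    intro w'
    refine List.Pairwise.map _ (fun a b => downF_disjoint) ?_
    split
    · exact List.Pairwise.sublist ((t.blocks v.castSucc).eraseIdx_sublist jM)
        (t.blocks_disjoint _)
    · exact t.blocks_disjoint _
  blocks_cover := by
    intro w' c'
    rw [mem_map_downF]
    by_cases hw : w' = v
    · rw [if_pos hw, hw, hcov c', cover_castSucc]
    · rw [if_neg hw, cover_castSucc]

/-- the tree obtained by deleting the last vertex, when its block survives -/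
def delTreeB (t : IncSchroederTree (m + 1))
    (hne : ∀ w' : Fin (m + 1), ∀ B ∈ t.blocks w'.castSucc, (downF B).Nonempty) :
    IncSchroederTree m where
  par := delPar t
  par_root := delPar_root t
  par_lt := delPar_lt t
  blocks w' := (t.blocks w'.castSucc).map downF
  blocks_nonempty := by
    intro w' B' hB'
    obtain ⟨B, hB, rfl⟩ := List.mem_map.mp hB'
    exact hne w' B hB
  blocks_disjoint := fun w' =>
    List.Pairwise.map _ (fun a b => downF_disjoint) (t.blocks_disjoint _)
  blocks_cover := by
    intro w' c'
    rw [mem_map_downF, cover_castSucc]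

lemma mem_eraseIdx_orig {α : Type*} {l : List α} {j : ℕ} (hj : j < l.length) {B : α}
    (hB : B ∈ l.eraseIdx j) : ∃ i, ∃ h : i < l.length, i ≠ j ∧ l[i] = B := by
  obtain ⟨k, hk, hkB⟩ := List.mem_iff_getElem.mp hB
  have hklen : k < l.length - 1 := by
    rwa [List.length_eraseIdx, if_pos hj] at hk
  rw [List.getElem_eraseIdx] at hkB
  by_cases hkj : k < j
  · rw [dif_pos hkj] at hkB
    exact ⟨k, by omega, by omega, hkB⟩
  · rw [dif_neg hkj] at hkB
    exact ⟨k + 1, by omega, by omega, hkB⟩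

lemma getElem_mem_eraseIdx {α : Type*} {l : List α} {i j : ℕ} (hi : i < l.length)
    (hj : j < l.length) (hij : i ≠ j) : l[i] ∈ l.eraseIdx j := by
  rw [List.mem_iff_getElem]
  have hlen : (l.eraseIdx j).length = l.length - 1 := by
    rw [List.length_eraseIdx, if_pos hj]
  by_cases hlt : i < j
  · exact ⟨i, by omega, by rw [List.getElem_eraseIdx, dif_pos hlt]⟩
  · refine ⟨i - 1, by omega, ?_⟩
    rw [List.getElem_eraseIdx, dif_neg (by omega)]
    congr 1
    omega

lemma insTree_surjective :
    Function.Surjective (fun x : Σ t' : IncSchroederTree m, Σ v : Fin (m + 1),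
        Fin ((t'.blocks v).length + 1) ⊕ Fin ((t'.blocks v).length) =>
      insTree x.1 x.2.1 x.2.2) := by
  intro t
  have hM0 : (Fin.last (m + 1) : Fin (m + 2)) ≠ 0 := by simp [Fin.ext_iff]
  have hparM : t.par (Fin.last (m + 1)) ≠ Fin.last (m + 1) :=
    (t.par_lt _ hM0).ne
  set v := (t.par (Fin.last (m + 1))).castPred hparM with hvdef
  have hv : v.castSucc = t.par (Fin.last (m + 1)) := Fin.castSucc_castPred _ _
  obtain ⟨B0, hB0, hMB0⟩ : ∃ B ∈ t.blocks v.castSucc, Fin.last (m + 1) ∈ B :=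
    (t.blocks_cover _ _).mpr ⟨hv.symm, hM0⟩
  obtain ⟨jM, hjM, rfl⟩ := List.mem_iff_getElem.mp hB0
  have hMnot : ∀ i (hi : i < (t.blocks v.castSucc).length), i ≠ jM →
      Fin.last (m + 1) ∉ (t.blocks v.castSucc)[i] := by
    intro i hi hne hcon
    exact hne (index_eq_of_pairwise_disjoint (t.blocks_disjoint _) hi hjM hcon hMB0)
  have hfree : ∀ w' : Fin (m + 1), w' ≠ v → ∀ B ∈ t.blocks w'.castSucc,
      Fin.last (m + 1) ∉ B := by
    intro w' hw B hB hcon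
    have hp := ((t.blocks_cover _ _).mp ⟨B, hB, hcon⟩).1
    rw [← hv] at hp
    exact hw (Fin.castSucc_injective _ hp.symm)
  -- every block away from the M-block, after down-projecting, is nonempty
  have hneB : ∀ w' : Fin (m + 1), w' ≠ v → ∀ B ∈ t.blocks w'.castSucc, (downF B).Nonempty :=
    fun w' hw B hB => downF_nonempty (t.blocks_nonempty _ B hB) (hfree w' hw B hB)
  by_cases hcase : (t.blocks v.castSucc)[jM] = {Fin.last (m + 1)}
  · -- Case A : the block of the last vertex is a singleton; it is removed
    have hneA : ∀ w' : Fin (m + 1),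
        ∀ B ∈ (if w' = v then (t.blocks v.castSucc).eraseIdx jM else t.blocks w'.castSucc),
          (downF B).Nonempty := by
      intro w' B hB
      by_cases hw : w' = v
      · rw [if_pos hw] at hB
        obtain ⟨i, hi, hine, rfl⟩ := mem_eraseIdx_orig hjM hB
        exact downF_nonempty (t.blocks_nonempty _ _ (List.getElem_mem hi)) (hMnot i hi hine)
      · rw [if_neg hw] at hB
        exact hneB w' hw B hB
    have hcovA : ∀ c' : Fin (m + 1),
        (∃ B ∈ (t.blocks v.castSucc).eraseIdx jM, c'.castSucc ∈ B) ↔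
          (∃ B ∈ t.blocks v.castSucc, c'.castSucc ∈ B) := by
      intro c'
      constructor
      · rintro ⟨B, hB, hc⟩
        exact ⟨B, ((t.blocks v.castSucc).eraseIdx_sublist jM).mem hB, hc⟩
      · rintro ⟨B, hB, hc⟩
        obtain ⟨i, hi, rfl⟩ := List.mem_iff_getElem.mp hB
        have hine : i ≠ jM := by
          intro hcon
          subst hcon
          rw [hcase] at hc
          exact (Fin.castSucc_lt_last c').ne (Finset.mem_singleton.mp hc)
        exact ⟨_, getElem_mem_eraseIdx hi hjM hine, hc⟩
    set t' := delTreeA t v jM hneA hcovA with ht'def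
    have hbv : t'.blocks v = ((t.blocks v.castSucc).eraseIdx jM).map downF := by
      show (if v = v then (t.blocks v.castSucc).eraseIdx jM else t.blocks v.castSucc).map downF
        = _
      rw [if_pos rfl]
    have hbw : ∀ w' : Fin (m + 1), w' ≠ v →
        t'.blocks w' = (t.blocks w'.castSucc).map downF := by
      intro w' hw
      show (if w' = v then (t.blocks v.castSucc).eraseIdx jM else t.blocks w'.castSucc).map downF
        = _
      rw [if_neg hw]
    have hlenv : (t'.blocks v).length = (t.blocks v.castSucc).length - 1 := by
      rw [hbv, List.length_map, List.length_eraseIdx, if_pos hjM]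
    have hjMlt : jM < (t'.blocks v).length + 1 := by
      rw [hlenv]; omega
    refine ⟨⟨t', v, Sum.inl ⟨jM, hjMlt⟩⟩, ?_⟩
    dsimp only
    apply IncSchroederTree.ext'
    · funext c
      by_cases hc : c = Fin.last (m + 1)
      · subst hc
        rw [insTree_par_last, hv]
      · obtain ⟨c', rfl⟩ := Fin.exists_castSucc_eq.mpr hc
        rw [insTree_par_castSucc]
        show (delPar t c').castSucc = _
        rw [castSucc_delPar]
    · funext w
      by_cases hw : w = Fin.last (m + 1)
      · subst hw
        rw [insTree_blocks_last, IncSchroederTree.blocks_last]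
      · obtain ⟨w', rfl⟩ := Fin.exists_castSucc_eq.mpr hw
        rw [insTree_blocks_castSucc]
        by_cases hwv : w' = v
        · subst hwv
          rw [if_pos rfl, insBlocks_inl]
          have hmapup : (t'.blocks v).map upF = (t.blocks v.castSucc).eraseIdx jM := by
            rw [hbv, List.map_map]
            have : ∀ B ∈ (t.blocks v.castSucc).eraseIdx jM, (upF ∘ downF) B = id B := by
              intro B hB
              obtain ⟨i, hi, hine, rfl⟩ := mem_eraseIdx_orig hjM hB
              exact upF_downF_of_not_mem (hMnot i hi hine)
            rw [List.map_congr_left this, List.map_id]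
          rw [hmapup]
          show ((t.blocks v.castSucc).eraseIdx jM).insertIdx jM {Fin.last (m + 1)} = _
          rw [← hcase]
          exact insertIdx_eraseIdx_self _ _ hjM
        · rw [if_neg hwv, hbw w' hwv, List.map_map]
          have : ∀ B ∈ t.blocks w'.castSucc, (upF ∘ downF) B = id B := fun B hB =>
            upF_downF_of_not_mem (hfree w' hwv B hB)
          rw [List.map_congr_left this, List.map_id]
  · -- Case B : the block of the last vertex survives
    have hneBall : ∀ w' : Fin (m + 1), ∀ B ∈ t.blocks w'.castSucc, (downF B).Nonempty := by
      intro w' B hB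
      by_cases hw : w' = v
      · subst hw
        obtain ⟨i, hi, rfl⟩ := List.mem_iff_getElem.mp hB
        by_cases hij : i = jM
        · subst hij
          exact downF_nonempty' (t.blocks_nonempty _ _ (List.getElem_mem hi)) hcase
        · exact downF_nonempty (t.blocks_nonempty _ _ (List.getElem_mem hi)) (hMnot i hi hij)
      · exact hneB w' hw B hB
    set t' := delTreeB t hneBall with ht'def
    have hbw : ∀ w' : Fin (m + 1), t'.blocks w' = (t.blocks w'.castSucc).map downF :=
      fun w' => rfl
    have hlenv : (t'.blocks v).length = (t.blocks v.castSucc).length := by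
      rw [hbw, List.length_map]
    have hjMlt : jM < (t'.blocks v).length := by rw [hlenv]; exact hjM
    refine ⟨⟨t', v, Sum.inr ⟨jM, hjMlt⟩⟩, ?_⟩
    dsimp only
    apply IncSchroederTree.ext'
    · funext c
      by_cases hc : c = Fin.last (m + 1)
      · subst hc
        rw [insTree_par_last, hv]
      · obtain ⟨c', rfl⟩ := Fin.exists_castSucc_eq.mpr hc
        rw [insTree_par_castSucc]
        show (delPar t c').castSucc = _
        rw [castSucc_delPar]
    · funext w
      by_cases hw : w = Fin.last (m + 1)
      · subst hw
        rw [insTree_blocks_last, IncSchroederTree.blocks_last]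
      · obtain ⟨w', rfl⟩ := Fin.exists_castSucc_eq.mpr hw
        rw [insTree_blocks_castSucc]
        by_cases hwv : w' = v
        · subst hwv
          rw [if_pos rfl, insBlocks_inr]
          have hget : (t'.blocks v).get ⟨jM, hjMlt⟩ =
              downF ((t.blocks v.castSucc)[jM]'hjM) := by
            simp [hbw, List.get_eq_getElem, List.getElem_map]
          apply List.ext_getElem
          · rw [List.length_set, List.length_map, hbw, List.length_map]
          · intro i h1 h2
            rw [List.getElem_set]
            by_cases hij : jM = i
            · rw [if_pos (by exact_mod_cast hij)]
              subst hij
              rw [hget, upF_downF, Finset.insert_erase hMB0]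
            · rw [if_neg (by exact_mod_cast hij), List.getElem_map]
              have hbi : (t'.blocks v)[i]'(by
                  rw [hbw, List.length_map]
                  rw [List.length_set, List.length_map, hbw, List.length_map] at h1
                  exact h1) =
                  downF ((t.blocks v.castSucc)[i]'h2) := by
                simp [hbw, List.getElem_map]
              rw [hbi, upF_downF_of_not_mem (hMnot i h2 (fun h => hij h.symm))]
        · rw [if_neg hwv, hbw w', List.map_map]
          have : ∀ B ∈ t.blocks w'.castSucc, (upF ∘ downF) B = id B := fun B hB =>
            upF_downF_of_not_mem (hfree w' hwv B hB)
          rw [List.map_congr_left this, List.map_id]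

end Surj

lemma signed_sum (m : ℕ) :
    ∑ t : IncSchroederTree m, (-1 : ℤ) ^ (m + t.numBlocks) = m.factorial := by
  classical
  induction m with
  | zero =>
    have hnb : ∀ t : IncSchroederTree 0, t.numBlocks = 0 :=
      fun t => Nat.le_zero.mp t.numBlocks_le
    have hconst : ∑ t : IncSchroederTree 0, (-1 : ℤ) ^ (0 + t.numBlocks) =
        ∑ _t : IncSchroederTree 0, 1 := by
      apply Finset.sum_congr rfl
      intro t _
      rw [hnb t]
      norm_num
    rw [hconst]
    simp [Finset.card_univ, Fintype.card_unique]
  | succ m ih =>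
    have hbij : Function.Bijective (fun x : Σ t' : IncSchroederTree m, Σ v : Fin (m + 1),
        Fin ((t'.blocks v).length + 1) ⊕ Fin ((t'.blocks v).length) =>
          insTree x.1 x.2.1 x.2.2) := ⟨insTree_injective, insTree_surjective⟩
    have h1 : ∑ t : IncSchroederTree (m + 1), (-1 : ℤ) ^ (m + 1 + t.numBlocks) =
        ∑ x : Σ t' : IncSchroederTree m, Σ v : Fin (m + 1),
          Fin ((t'.blocks v).length + 1) ⊕ Fin ((t'.blocks v).length),
            (-1 : ℤ) ^ (m + 1 + (insTree x.1 x.2.1 x.2.2).numBlocks) :=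
      (Fintype.sum_bijective _ hbij _ _ (fun x => rfl)).symm
    rw [h1]
    have h2 : ∀ x : Σ t' : IncSchroederTree m, Σ v : Fin (m + 1),
        Fin ((t'.blocks v).length + 1) ⊕ Fin ((t'.blocks v).length),
        (-1 : ℤ) ^ (m + 1 + (insTree x.1 x.2.1 x.2.2).numBlocks) =
          (-1 : ℤ) ^ (m + 1 + x.1.numBlocks + posδ x.2.2) := by
      intro x
      rw [numBlocks_insTree]
      congr 1
      omega
    rw [Finset.sum_congr rfl (fun x _ => h2 x)]
    rw [← Finset.univ_sigma_univ, Finset.sum_sigma]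
    have h3 : ∀ t' : IncSchroederTree m,
        (∑ y : Σ v : Fin (m + 1), Fin ((t'.blocks v).length + 1) ⊕ Fin ((t'.blocks v).length),
          (-1 : ℤ) ^ (m + 1 + t'.numBlocks + posδ y.2)) =
        (m + 1 : ℤ) * (-1 : ℤ) ^ (m + t'.numBlocks) := by
      intro t'
      rw [← Finset.univ_sigma_univ, Finset.sum_sigma]
      have h4 : ∀ v : Fin (m + 1),
          (∑ pos : Fin ((t'.blocks v).length + 1) ⊕ Fin ((t'.blocks v).length),
            (-1 : ℤ) ^ (m + 1 + t'.numBlocks + posδ pos)) =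
          (-1 : ℤ) ^ (m + t'.numBlocks) := by
        intro v
        rw [Fintype.sum_sum_type]
        simp only [posIdx_inl, posIdx_inr, posδ, Sum.elim_inl, Sum.elim_inr]
        rw [Finset.sum_const, Finset.sum_const]
        simp only [Finset.card_univ, Fintype.card_fin, nsmul_eq_mul]
        have e1 : (-1 : ℤ) ^ (m + 1 + t'.numBlocks + 1) = (-1 : ℤ) ^ (m + t'.numBlocks) := by
          rw [show m + 1 + t'.numBlocks + 1 = (m + t'.numBlocks) + 2 by omega, pow_add]
          ring
        have e2 : (-1 : ℤ) ^ (m + 1 + t'.numBlocks + 0) = -(-1 : ℤ) ^ (m + t'.numBlocks) := by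
          rw [show m + 1 + t'.numBlocks + 0 = (m + t'.numBlocks) + 1 by omega, pow_succ]
          ring
        rw [e1, e2]
        push_cast
        ring
      rw [Finset.sum_congr rfl (fun v _ => h4 v)]
      rw [Finset.sum_const]
      simp only [Finset.card_univ, Fintype.card_fin, nsmul_eq_mul]
      push_cast
      ring
    rw [Finset.sum_congr rfl (fun t' _ => h3 t'), ← Finset.mul_sum, ih]
    rw [Nat.factorial_succ]
    push_cast
    ring

end IncSchroederTree

theorem signed_count_incSchroeder (n : ℕ) (hn : 1 ≤ n) :
    ∑ k ∈ Finset.range n,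
      (-1 : ℤ) ^ (n + k - 1) *
        (Nat.card {t : IncSchroederTree (n - 1) // t.numBlocks = k}) =
      (n - 1).factorial := by
  classical
  obtain ⟨m, rfl⟩ : ∃ m, n = m + 1 := ⟨n - 1, by omega⟩
  simp only [Nat.add_sub_cancel]
  have hcard : ∀ k, (Nat.card {t : IncSchroederTree m // t.numBlocks = k} : ℤ) =
      ((Finset.univ.filter (fun t : IncSchroederTree m => t.numBlocks = k)).card : ℤ) := by
    intro k
    rw [Nat.card_eq_fintype_card, Fintype.card_subtype]
  have step1 : ∑ k ∈ Finset.range (m + 1),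
      (-1 : ℤ) ^ (m + 1 + k - 1) *
        (Nat.card {t : IncSchroederTree m // t.numBlocks = k}) =
      ∑ k ∈ Finset.range (m + 1),
        ∑ t ∈ Finset.univ.filter (fun t : IncSchroederTree m => t.numBlocks = k),
          (-1 : ℤ) ^ (m + t.numBlocks) := by
    apply Finset.sum_congr rfl
    intro k _
    rw [hcard]
    have hinner : ∑ t ∈ Finset.univ.filter (fun t : IncSchroederTree m => t.numBlocks = k),
        (-1 : ℤ) ^ (m + t.numBlocks) =
        ∑ _t ∈ Finset.univ.filter (fun t : IncSchroederTree m => t.numBlocks = k),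
          (-1 : ℤ) ^ (m + k) := by
      apply Finset.sum_congr rfl
      intro t ht
      rw [(Finset.mem_filter.mp ht).2]
    rw [hinner]
    rw [Finset.sum_const, nsmul_eq_mul]
    rw [show m + 1 + k - 1 = m + k by omega]
    ring
  refine step1.trans ?_
  rw [Finset.sum_fiberwise_of_maps_to (fun t _ => Finset.mem_range.mpr
    (Nat.lt_succ_of_le t.numBlocks_le)) (fun t : IncSchroederTree m =>
      (-1 : ℤ) ^ (m + t.numBlocks))]
  exact IncSchroederTree.signed_sum m
end

section
/- Let h(x) be a formal power series over ℚ with h(0)=0 and h'(0)=1, and let f(x) = x − h(x). Then the compositional inverse of h is given by h^{<-1>}(x) = x + ∑_{k≥1} (1/k!) · D^{k-1}( f(x)^k ), where D denotes formal differentiation and the sum converges in the formal power series topology (for each m, only finitely many terms contribute to the coefficient of x^m). -/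
open PowerSeries

/-- Composition `f(g)` of formal power series (intended for `g` with zero constant term). -/
noncomputable def psComp (f g : PowerSeries ℚ) : PowerSeries ℚ :=
  PowerSeries.mk fun m =>
    ∑ k ∈ Finset.range (m + 1), (PowerSeries.coeff k f) * (PowerSeries.coeff m (g ^ k))

namespace LagrangeAux
open Finset

lemma coeff_pow_zero {g : PowerSeries ℚ} (hg : PowerSeries.constantCoeff g = 0)
    {m k : ℕ} (hmk : m < k) : PowerSeries.coeff m (g ^ k) = 0 := by
  obtain ⟨u, hu⟩ := pow_dvd_pow_of_dvd (PowerSeries.X_dvd_iff.mpr hg) k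
  rw [hu, PowerSeries.coeff_X_pow_mul', if_neg (by omega)]

lemma coeff_psComp (a g : PowerSeries ℚ) (m : ℕ) :
    PowerSeries.coeff m (psComp a g) =
      ∑ k ∈ range (m + 1), PowerSeries.coeff k a * PowerSeries.coeff m (g ^ k) := by
  simp [psComp]

lemma coeff_psComp_stable {g : PowerSeries ℚ} (hg : PowerSeries.constantCoeff g = 0)
    (a : PowerSeries ℚ) {m n : ℕ} (hmn : m < n) :
    PowerSeries.coeff m (psComp a g) =
      ∑ k ∈ range n, PowerSeries.coeff k a * PowerSeries.coeff m (g ^ k) := by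
  rw [coeff_psComp]
  apply Finset.sum_subset (Finset.range_subset_range.mpr hmn)
  intro k hk hk'
  rw [coeff_pow_zero hg (by simp only [mem_range] at hk hk' ⊢; omega), mul_zero]

lemma psComp_one (g : PowerSeries ℚ) : psComp 1 g = 1 := by
  ext m
  rw [coeff_psComp]
  simp [PowerSeries.coeff_one]

lemma psComp_add (a b g : PowerSeries ℚ) : psComp (a + b) g = psComp a g + psComp b g := by
  ext m
  simp [coeff_psComp, Finset.sum_add_distrib, add_mul]

lemma psComp_sub (a b g : PowerSeries ℚ) : psComp (a - b) g = psComp a g - psComp b g := by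
  ext m
  simp [coeff_psComp, Finset.sum_sub_distrib, sub_mul]

lemma psComp_X {g : PowerSeries ℚ} (hg : PowerSeries.constantCoeff g = 0) :
    psComp X g = g := by
  ext m
  rw [coeff_psComp]
  rcases Nat.eq_zero_or_pos m with hm | hm
  · subst hm
    simpa using hg.symm
  · rw [Finset.sum_eq_single 1]
    · simp
    · intro k hk hk1
      simp [PowerSeries.coeff_X, hk1]
    · intro hk
      simp only [mem_range] at hk
      omega

lemma psComp_id (a : PowerSeries ℚ) : psComp a X = a := by
  ext m
  rw [coeff_psComp, Finset.sum_eq_single m]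
  · simp [PowerSeries.coeff_X_pow]
  · intro k hk hkm
    simp [PowerSeries.coeff_X_pow, Ne.symm hkm]
  · intro hk
    simp at hk


lemma coeff_aeval_trunc (g a : PowerSeries ℚ) (n m : ℕ) :
    PowerSeries.coeff m (Polynomial.aeval g (trunc (n + 1) a)) =
      ∑ k ∈ range (n + 1), PowerSeries.coeff k a * PowerSeries.coeff m (g ^ k) := by
  rw [Polynomial.aeval_eq_sum_range' (PowerSeries.natDegree_trunc_lt a n) g, map_sum]
  apply Finset.sum_congr rfl
  intro k hk
  rw [PowerSeries.coeff_trunc]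
  simp only [mem_range] at hk
  rw [if_pos hk, map_smul, smul_eq_mul]

lemma coeff_psComp_eq_aeval {g : PowerSeries ℚ} (hg : PowerSeries.constantCoeff g = 0)
    (a : PowerSeries ℚ) {m n : ℕ} (hmn : m ≤ n) :
    PowerSeries.coeff m (psComp a g) =
      PowerSeries.coeff m (Polynomial.aeval g (trunc (n + 1) a)) := by
  rw [coeff_aeval_trunc, coeff_psComp_stable hg a (Nat.lt_succ_of_le hmn)]

lemma coeff_aeval_eq_zero {g : PowerSeries ℚ} (hg : PowerSeries.constantCoeff g = 0)
    {p : Polynomial ℚ} {m : ℕ} (hp : ∀ k ≤ m, p.coeff k = 0) :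
    PowerSeries.coeff m (Polynomial.aeval g p) = 0 := by
  rw [Polynomial.aeval_eq_sum_range, map_sum]
  apply Finset.sum_eq_zero
  intro k _
  rcases le_or_gt k m with hkm | hkm
  · rw [hp k hkm, zero_smul, map_zero]
  · rw [map_smul, smul_eq_mul, coeff_pow_zero hg hkm, mul_zero]

lemma psComp_mul {g : PowerSeries ℚ} (hg : PowerSeries.constantCoeff g = 0)
    (a b : PowerSeries ℚ) : psComp (a * b) g = psComp a g * psComp b g := by
  ext m
  rw [coeff_psComp_eq_aeval hg (a*b) (le_refl m)]
  have key : PowerSeries.coeff m (Polynomial.aeval g (trunc (m + 1) (a * b)))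
      = PowerSeries.coeff m (Polynomial.aeval g (trunc (m + 1) a * trunc (m + 1) b)) := by
    have hz : ∀ k ≤ m,
        (trunc (m + 1) (a * b) - trunc (m + 1) a * trunc (m + 1) b).coeff k = 0 := by
      intro k hk
      rw [Polynomial.coeff_sub, PowerSeries.coeff_trunc, if_pos (by omega),
        Polynomial.coeff_mul, PowerSeries.coeff_mul]
      rw [sub_eq_zero]
      apply Finset.sum_congr rfl
      intro p hp
      have h1 : p.1 ≤ k := Finset.HasAntidiagonal.antidiagonal.fst_le hp
      have h2 : p.2 ≤ k := Finset.HasAntidiagonal.antidiagonal.snd_le hp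
      rw [PowerSeries.coeff_trunc, PowerSeries.coeff_trunc, if_pos (by omega), if_pos (by omega)]
    have := coeff_aeval_eq_zero hg hz
    rw [map_sub, map_sub, sub_eq_zero] at this
    exact this
  rw [key]
  rw [map_mul]
  rw [PowerSeries.coeff_mul]
  rw [PowerSeries.coeff_mul]
  apply Finset.sum_congr rfl
  intro p hp
  have h1 : p.1 ≤ m := Finset.HasAntidiagonal.antidiagonal.fst_le hp
  have h2 : p.2 ≤ m := Finset.HasAntidiagonal.antidiagonal.snd_le hp
  rw [coeff_psComp_eq_aeval hg a h1, coeff_psComp_eq_aeval hg b h2]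

lemma psComp_pow {g : PowerSeries ℚ} (hg : PowerSeries.constantCoeff g = 0)
    (a : PowerSeries ℚ) (n : ℕ) : psComp (a ^ n) g = (psComp a g) ^ n := by
  induction n with
  | zero => simpa using psComp_one g
  | succ n ih => rw [pow_succ, pow_succ, psComp_mul hg, ih]

lemma psComp_assoc {b c : PowerSeries ℚ} (hb : PowerSeries.constantCoeff b = 0)
    (hc : PowerSeries.constantCoeff c = 0) (a : PowerSeries ℚ) :
    psComp (psComp a b) c = psComp a (psComp b c) := by
  ext m
  rw [coeff_psComp, coeff_psComp]
  calc ∑ k ∈ range (m + 1), PowerSeries.coeff k (psComp a b) * PowerSeries.coeff m (c ^ k)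
      = ∑ k ∈ range (m + 1), ∑ j ∈ range (m + 1),
          PowerSeries.coeff j a * PowerSeries.coeff k (b ^ j) * PowerSeries.coeff m (c ^ k) := by
        apply Finset.sum_congr rfl
        intro k hk
        rw [coeff_psComp_stable hb a (mem_range.mp hk), Finset.sum_mul]
    _ = ∑ j ∈ range (m + 1), PowerSeries.coeff j a *
          ∑ k ∈ range (m + 1), PowerSeries.coeff k (b ^ j) * PowerSeries.coeff m (c ^ k) := by
        rw [Finset.sum_comm]
        apply Finset.sum_congr rfl
        intro j _
        rw [Finset.mul_sum]
        apply Finset.sum_congr rfl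
        intro k _
        ring
    _ = ∑ j ∈ range (m + 1), PowerSeries.coeff j a * PowerSeries.coeff m ((psComp b c) ^ j) := by
        apply Finset.sum_congr rfl
        intro j _
        rw [← psComp_pow hc, coeff_psComp_stable hc (b ^ j) (Nat.lt_succ_self m)]

lemma coeff_pow_diag {g : PowerSeries ℚ} (hg : PowerSeries.constantCoeff g = 0) (m : ℕ) :
    PowerSeries.coeff m (g ^ m) = (PowerSeries.coeff 1 g) ^ m := by
  induction m with
  | zero => simp
  | succ m ih =>
    rw [pow_succ, pow_succ, PowerSeries.coeff_mul, Finset.sum_eq_single (m, 1)]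
    · rw [ih]
    · rintro ⟨i, j⟩ hij hne
      simp only [Finset.HasAntidiagonal.mem_antidiagonal] at hij
      rcases Nat.lt_or_ge i m with hi | hi
      · rw [coeff_pow_zero hg hi, zero_mul]
      · have hj : j = 0 ∨ i = m ∧ j = 1 := by omega
        rcases hj with hj | ⟨hi', hj⟩
        · subst hj
          rw [PowerSeries.coeff_zero_eq_constantCoeff, hg, mul_zero]
        · exact absurd (by simp [hi', hj]) hne
    · intro hmem
      simp at hmem

noncomputable def wc (h : PowerSeries ℚ) : ℕ → ℚ
  | 0 => 0
  | m + 1 => (if m = 0 then 1 else 0)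
      - ∑ n ∈ (Finset.range (m + 1)).attach, wc h n.1 * PowerSeries.coeff (m + 1) (h ^ n.1)
  decreasing_by exact Finset.mem_range.mp n.2

lemma wc_zero (h : PowerSeries ℚ) : wc h 0 = 0 := by rw [wc]

lemma psComp_wc {g : PowerSeries ℚ} (hg0 : PowerSeries.constantCoeff g = 0)
    (hg1 : PowerSeries.coeff 1 g = 1) :
    psComp (PowerSeries.mk (wc g)) g = X := by
  ext m
  rw [coeff_psComp]
  cases m with
  | zero => simp [wc_zero]
  | succ m =>
    rw [Finset.sum_range_succ, coeff_pow_diag hg0, hg1, one_pow, mul_one]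
    conv_lhs => rw [PowerSeries.coeff_mk, wc]
    simp only [PowerSeries.coeff_mk, PowerSeries.coeff_X]
    rw [Finset.sum_attach (Finset.range (m + 1))
      (fun n => wc g n * PowerSeries.coeff (m + 1) (g ^ n))]
    rcases Nat.eq_zero_or_pos m with hm | hm
    · subst hm
      rw [if_pos rfl, if_pos rfl]
      ring
    · rw [if_neg (by omega), if_neg (by omega)]
      ring

lemma coeff_iter_deriv (P : PowerSeries ℚ) (i m : ℕ) :
    PowerSeries.coeff m ((fun p => PowerSeries.derivative ℚ p)^[i] P) =
      ((m + i).factorial / m.factorial : ℚ) * PowerSeries.coeff (m + i) P := by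
  induction i generalizing m with
  | zero =>
    simp [div_self (Nat.cast_ne_zero.mpr (Nat.factorial_ne_zero m) : (m.factorial:ℚ) ≠ 0)]
  | succ i ih =>
    rw [Function.iterate_succ_apply', PowerSeries.coeff_derivative, ih (m + 1)]
    have h1 : (m.factorial : ℚ) ≠ 0 := Nat.cast_ne_zero.mpr (Nat.factorial_ne_zero m)
    have h2 : ((m + 1).factorial : ℚ) ≠ 0 := Nat.cast_ne_zero.mpr (Nat.factorial_ne_zero _)
    have h3 : ((m + 1).factorial : ℚ) = (m + 1) * m.factorial := by
      rw [Nat.factorial_succ]; push_cast; ring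
    have h4 : m + 1 + i = m + (i + 1) := by omega
    rw [h4]
    rw [h3]
    field_simp

noncomputable def Bser (m : ℕ) : PowerSeries ℚ :=
  PowerSeries.mk fun k => ((m + k - 1).choose k : ℚ)

lemma Bser_zero : Bser 0 = 1 := by
  ext k
  cases k with
  | zero => simp [Bser]
  | succ k =>
    rw [PowerSeries.coeff_one, if_neg (Nat.succ_ne_zero k)]
    simp only [Bser, PowerSeries.coeff_mk]
    rw [Nat.choose_eq_zero_of_lt (by omega)]
    simp

lemma Bser_succ (m : ℕ) : (1 - X) * Bser (m + 1) = Bser m := by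
  ext k
  rw [sub_mul, one_mul, map_sub]
  cases k with
  | zero =>
    simp only [Bser, PowerSeries.coeff_zero_eq_constantCoeff, map_sub]
    simp [PowerSeries.coeff_mk]
  | succ k =>
    rw [PowerSeries.coeff_succ_X_mul]
    simp only [Bser, PowerSeries.coeff_mk]
    have e1 : m + 1 + (k + 1) - 1 = (m + k) + 1 := by omega
    have e2 : m + 1 + k - 1 = m + k := by omega
    have e3 : m + (k + 1) - 1 = m + k := by omega
    rw [e1, e2, e3, Nat.choose_succ_succ (m + k) k]
    push_cast
    ring

lemma Bser_inv (m : ℕ) : (1 - X) ^ m * Bser m = 1 := by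
  induction m with
  | zero => simp [Bser_zero]
  | succ m ih =>
    calc (1 - X) ^ (m + 1) * Bser (m + 1) = (1 - X) ^ m * ((1 - X) * Bser (m + 1)) := by ring
    _ = (1 - X) ^ m * Bser m := by rw [Bser_succ]
    _ = 1 := ih

lemma coeff_Bser (m k : ℕ) :
    PowerSeries.coeff k (Bser m) = ((m + k - 1).choose k : ℚ) := by
  simp [Bser]


section Key

variable {h A : PowerSeries ℚ}

lemma deriv_pow_mul (hhA : h * A = X) (s : ℕ) :
    PowerSeries.derivative ℚ (h ^ (s + 1)) * A ^ (s + 1) =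
      (s + 1) • (X ^ s * (PowerSeries.derivative ℚ h * A)) := by
  rw [Derivation.leibniz_pow]
  simp only [Nat.add_sub_cancel, smul_eq_mul, smul_mul_assoc]
  congr 1
  calc h ^ s * PowerSeries.derivative ℚ h * A ^ (s + 1)
      = (h * A) ^ s * (PowerSeries.derivative ℚ h * A) := by ring
    _ = X ^ s * (PowerSeries.derivative ℚ h * A) := by rw [hhA]

lemma key_diag (hhA : h * A = X) (hA0 : PowerSeries.constantCoeff A = 1)
    (hh1 : PowerSeries.coeff 1 h = 1) (s : ℕ) :
    PowerSeries.coeff s (PowerSeries.derivative ℚ (h ^ (s + 1)) * A ^ (s + 1)) = (s : ℚ) + 1 := by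
  rw [deriv_pow_mul hhA, map_nsmul]
  have c0 : PowerSeries.coeff s (X ^ s * (PowerSeries.derivative ℚ h * A)) = 1 := by
    have := PowerSeries.coeff_X_pow_mul (PowerSeries.derivative ℚ h * A) s 0
    rw [zero_add] at this
    rw [this, PowerSeries.coeff_zero_eq_constantCoeff, map_mul, hA0, mul_one,
      ← PowerSeries.coeff_zero_eq_constantCoeff, PowerSeries.coeff_derivative, zero_add, hh1]
    norm_num
  rw [c0]
  simp

lemma key_lt (hhA : h * A = X) (a b : ℕ) :
    PowerSeries.coeff (a + b + 1)
      (PowerSeries.derivative ℚ (h ^ (a + 1)) * A ^ (a + b + 2)) = 0 := by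
  have hDA : h * PowerSeries.derivative ℚ A + A * PowerSeries.derivative ℚ h = 1 := by
    have := congrArg (fun p => PowerSeries.derivative ℚ p) hhA
    simp only [Derivation.leibniz, smul_eq_mul, PowerSeries.derivative_X] at this
    exact this
  have e2 : PowerSeries.derivative ℚ h * A = 1 - h * PowerSeries.derivative ℚ A := by
    rw [eq_sub_iff_add_eq, mul_comm]
    rw [add_comm] at hDA
    exact hDA
  have expand : PowerSeries.derivative ℚ (h ^ (a + 1)) * A ^ (a + b + 2) =
      (a + 1) • (X ^ a * A ^ (b + 1) - X ^ (a + 1) * (A ^ b * PowerSeries.derivative ℚ A)) := by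
    have : A ^ (a + b + 2) = A ^ (a + 1) * A ^ (b + 1) := by ring
    rw [Derivation.leibniz_pow]
    simp only [Nat.add_sub_cancel, smul_eq_mul, smul_mul_assoc]
    congr 1
    calc h ^ a * PowerSeries.derivative ℚ h * A ^ (a + b + 2)
        = (h * A) ^ a * ((PowerSeries.derivative ℚ h * A) * A ^ (b + 1)) := by ring
      _ = X ^ a * ((1 - h * PowerSeries.derivative ℚ A) * A ^ (b + 1)) := by rw [hhA, e2]
      _ = X ^ a * A ^ (b + 1) - X ^ a * ((h * A) * (A ^ b * PowerSeries.derivative ℚ A)) := by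
          ring
      _ = X ^ a * A ^ (b + 1) - X ^ (a + 1) * (A ^ b * PowerSeries.derivative ℚ A) := by
          rw [hhA]; ring
  rw [expand, map_nsmul, map_sub]
  have c1 : PowerSeries.coeff (a + b + 1) (X ^ a * A ^ (b + 1)) =
      PowerSeries.coeff (b + 1) (A ^ (b + 1)) := by
    have := PowerSeries.coeff_X_pow_mul (A ^ (b + 1)) a (b + 1)
    rw [show b + 1 + a = a + b + 1 by omega] at this
    exact this
  have c2 : PowerSeries.coeff (a + b + 1) (X ^ (a + 1) * (A ^ b * PowerSeries.derivative ℚ A)) =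
      PowerSeries.coeff b (A ^ b * PowerSeries.derivative ℚ A) := by
    have := PowerSeries.coeff_X_pow_mul (A ^ b * PowerSeries.derivative ℚ A) (a + 1) b
    rw [show b + (a + 1) = a + b + 1 by omega] at this
    exact this
  have c3 : PowerSeries.coeff b (A ^ b * PowerSeries.derivative ℚ A) =
      PowerSeries.coeff (b + 1) (A ^ (b + 1)) := by
    have hd := PowerSeries.coeff_derivative (A ^ (b + 1)) b
    rw [Derivation.leibniz_pow] at hd
    simp only [Nat.add_sub_cancel, smul_eq_mul, map_nsmul] at hd
    rw [nsmul_eq_mul] at hd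
    push_cast at hd
    have hb : ((b : ℚ) + 1) ≠ 0 := by positivity
    apply mul_left_cancel₀ hb
    rw [hd]
    ring
  rw [c1, c2, c3]
  simp

end Key

lemma lagrange {h A w : PowerSeries ℚ} (h0 : PowerSeries.constantCoeff h = 0)
    (hh1 : PowerSeries.coeff 1 h = 1) (hhA : h * A = X)
    (hA0 : PowerSeries.constantCoeff A = 1) (hw : psComp w h = X) (s : ℕ) :
    ((s : ℚ) + 1) * PowerSeries.coeff (s + 1) w =
      PowerSeries.coeff s (A ^ (s + 1)) := by
  set P : PowerSeries ℚ :=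
    ∑ n ∈ range (s + 2), PowerSeries.C (PowerSeries.coeff n w) * h ^ n with hP
  have hPj : ∀ j, j ≤ s + 1 → PowerSeries.coeff j P = PowerSeries.coeff j X := by
    intro j hj
    rw [← hw, coeff_psComp_stable h0 w (show j < s + 2 by omega), hP, map_sum]
    apply Finset.sum_congr rfl
    intro n _
    rw [PowerSeries.coeff_C_mul]
  have hz : PowerSeries.coeff s
      (PowerSeries.derivative ℚ (P - X) * A ^ (s + 1)) = 0 := by
    rw [PowerSeries.coeff_mul]
    apply Finset.sum_eq_zero
    rintro ⟨i, j⟩ hij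
    have hijs : i + j = s := Finset.HasAntidiagonal.mem_antidiagonal.mp hij
    have : PowerSeries.coeff (i + 1) (P - X) = 0 := by
      rw [map_sub, hPj (i + 1) (by omega), sub_self]
    rw [PowerSeries.coeff_derivative, this, zero_mul, zero_mul]
  have hstep : PowerSeries.coeff s (PowerSeries.derivative ℚ P * A ^ (s + 1)) =
      PowerSeries.coeff s (A ^ (s + 1)) := by
    have hrw : PowerSeries.derivative ℚ P * A ^ (s + 1) =
        A ^ (s + 1) + PowerSeries.derivative ℚ (P - X) * A ^ (s + 1) := by
      rw [map_sub, PowerSeries.derivative_X]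
      ring
    rw [hrw, map_add, hz, add_zero]
  have hsum : PowerSeries.coeff s (PowerSeries.derivative ℚ P * A ^ (s + 1)) =
      ∑ n ∈ range (s + 2), PowerSeries.coeff n w *
        PowerSeries.coeff s (PowerSeries.derivative ℚ (h ^ n) * A ^ (s + 1)) := by
    have hDP : PowerSeries.derivative ℚ P =
        ∑ n ∈ range (s + 2), PowerSeries.C (PowerSeries.coeff n w) *
          PowerSeries.derivative ℚ (h ^ n) := by
      rw [hP, map_sum]
      apply Finset.sum_congr rfl
      intro n _
      rw [Derivation.leibniz, PowerSeries.derivative_C]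
      simp [smul_eq_mul]
    rw [hDP, Finset.sum_mul, map_sum]
    apply Finset.sum_congr rfl
    intro n _
    rw [mul_assoc, PowerSeries.coeff_C_mul]
  have heval : ∑ n ∈ range (s + 2), PowerSeries.coeff n w *
      PowerSeries.coeff s (PowerSeries.derivative ℚ (h ^ n) * A ^ (s + 1)) =
      PowerSeries.coeff (s + 1) w * ((s : ℚ) + 1) := by
    rw [Finset.sum_eq_single (s + 1)]
    · rw [key_diag hhA hA0 hh1 s]
    · intro n hn hne
      match n with
      | 0 =>
        rw [pow_zero, Derivation.map_one_eq_zero, zero_mul, map_zero, mul_zero]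
      | (a + 1) =>
        have ha : a + 1 ≤ s := by
          simp only [mem_range] at hn
          omega
        have e1 : a + (s - a - 1) + 1 = s := by omega
        have e2 : a + (s - a - 1) + 2 = s + 1 := by omega
        have := key_lt hhA (A := A) a (s - a - 1)
        rw [e1, e2] at this
        rw [this, mul_zero]
    · intro hmem
      exact absurd (by simp) hmem
  rw [hsum, heval] at hstep
  rw [← hstep]
  ring

end LagrangeAux

open LagrangeAux Finset in
theorem lagrange_inversion_variant (h : PowerSeries ℚ)
    (h0 : PowerSeries.constantCoeff h = 0) (h1 : PowerSeries.coeff 1 h = 1) :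
    psComp h
        (X + PowerSeries.mk fun m =>
          ∑ k ∈ Finset.Icc 1 m, (1 / (k.factorial : ℚ)) *
            PowerSeries.coeff m
              ((fun p => PowerSeries.derivative ℚ p)^[k - 1] ((X - h) ^ k))) = X ∧
    psComp
        (X + PowerSeries.mk fun m =>
          ∑ k ∈ Finset.Icc 1 m, (1 / (k.factorial : ℚ)) *
            PowerSeries.coeff m
              ((fun p => PowerSeries.derivative ℚ p)^[k - 1] ((X - h) ^ k))) h = X := by
  set f : PowerSeries ℚ := X - h with hf
  set g : PowerSeries ℚ := X + PowerSeries.mk fun m =>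
      ∑ k ∈ Finset.Icc 1 m, (1 / (k.factorial : ℚ)) *
        PowerSeries.coeff m
          ((fun p => PowerSeries.derivative ℚ p)^[k - 1] (f ^ k)) with hg
  -- basic facts about f
  have hf0 : PowerSeries.constantCoeff f = 0 := by
    rw [hf, map_sub, h0, PowerSeries.constantCoeff_X, sub_zero]
  have hf1 : PowerSeries.coeff 1 f = 0 := by
    rw [hf, map_sub, h1, PowerSeries.coeff_one_X, sub_self]
  -- the shifted series e with X * e = f
  set e : PowerSeries ℚ := PowerSeries.mk fun n => PowerSeries.coeff (n + 1) f with he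
  have he0 : PowerSeries.constantCoeff e = 0 := by
    rw [← PowerSeries.coeff_zero_eq_constantCoeff, he, PowerSeries.coeff_mk, zero_add, hf1]
  have hXe : X * e = f := by
    ext n
    cases n with
    | zero =>
      have hl : PowerSeries.coeff 0 (X * e) = 0 := by
        rw [PowerSeries.coeff_zero_eq_constantCoeff, map_mul, PowerSeries.constantCoeff_X,
          zero_mul]
      rw [hl, PowerSeries.coeff_zero_eq_constantCoeff, hf0]
    | succ n =>
      rw [PowerSeries.coeff_succ_X_mul, he, PowerSeries.coeff_mk]
  -- the series A = (1 - e)⁻¹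
  set A : PowerSeries ℚ := psComp (Bser 1) e with hA
  have hBser1 : (1 - X) * Bser 1 = 1 := by
    have := Bser_succ 0
    rwa [show Bser 0 = 1 by
      ext k
      rw [coeff_Bser]
      cases k with
      | zero => simp
      | succ k =>
        rw [PowerSeries.coeff_one, if_neg (Nat.succ_ne_zero k),
          Nat.choose_eq_zero_of_lt (by omega), Nat.cast_zero]] at this
  have hA1 : (1 - e) * A = 1 := by
    have hone : psComp 1 e = 1 := psComp_one e
    have : psComp ((1 - X) * Bser 1) e = (1 - e) * A := by
      rw [psComp_mul he0, psComp_sub, psComp_one, psComp_X he0, hA]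
    rw [← this, hBser1, hone]
  have hhA : h * A = X := by
    have hhe : h = X * (1 - e) := by
      rw [mul_sub, mul_one, hXe, hf]
      ring
    rw [hhe, mul_assoc, hA1, mul_one]
  have hA0 : PowerSeries.constantCoeff A = 1 := by
    have := congrArg (PowerSeries.constantCoeff) hA1
    rw [map_mul, map_sub, map_one, he0, sub_zero, one_mul] at this
    exact this
  -- powers of A expand binomially in e
  have hX1 : (1 - X : PowerSeries ℚ) ≠ 0 := by
    intro hc
    have := congrArg (PowerSeries.constantCoeff) hc
    rw [map_sub, map_one, PowerSeries.constantCoeff_X, sub_zero, map_zero] at this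
    exact one_ne_zero this
  have hBpow : ∀ m : ℕ, (Bser 1) ^ m = Bser m := by
    intro m
    apply mul_left_cancel₀ (pow_ne_zero m hX1)
    rw [Bser_inv, ← mul_pow, hBser1, one_pow]
  have coeff_Apow : ∀ m j : ℕ, PowerSeries.coeff j (A ^ m) =
      ∑ k ∈ range (j + 1), ((m + k - 1).choose k : ℚ) * PowerSeries.coeff j (e ^ k) := by
    intro m j
    rw [hA, ← psComp_pow he0, hBpow, coeff_psComp]
    apply Finset.sum_congr rfl
    intro k _
    rw [coeff_Bser]
  -- the left inverse w of h
  set w : PowerSeries ℚ := PowerSeries.mk (wc h) with hwdef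
  have hw : psComp w h = X := psComp_wc h0 h1
  have hw0 : PowerSeries.constantCoeff w = 0 := by
    rw [← PowerSeries.coeff_zero_eq_constantCoeff, hwdef, PowerSeries.coeff_mk, wc_zero]
  -- w = g
  have hwg : w = g := by
    ext m
    cases m with
    | zero =>
      have hgz : PowerSeries.coeff 0 g = 0 := by
        rw [hg, map_add, PowerSeries.coeff_mk]
        simp
      rw [hgz, PowerSeries.coeff_zero_eq_constantCoeff, hw0]
    | succ s =>
      have hs1 : ((s : ℚ) + 1) ≠ 0 := by positivity
      apply mul_left_cancel₀ hs1
      rw [lagrange h0 h1 hhA hA0 hw s, coeff_Apow (s + 1) s]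
      -- numeric helper
      have hnum : ∀ k : ℕ, 1 ≤ k →
          ((s : ℚ) + 1) * (1 / (k.factorial : ℚ)) * ((s + k).factorial / (s + 1).factorial) =
            ((s + k).choose k : ℚ) := by
        intro k hk
        have hch : ((s + k).choose k : ℚ) * (k.factorial : ℚ) * (s.factorial : ℚ) =
            ((s + k).factorial : ℚ) := by
          have := Nat.choose_mul_factorial_mul_factorial (Nat.le_add_left k s)
          rw [Nat.add_sub_cancel] at this
          exact_mod_cast congrArg (Nat.cast : ℕ → ℚ) this
        have hfs : ((s + 1).factorial : ℚ) = ((s : ℚ) + 1) * (s.factorial : ℚ) := by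
          rw [Nat.factorial_succ]; push_cast; ring
        have hk0 : (k.factorial : ℚ) ≠ 0 := Nat.cast_ne_zero.mpr (Nat.factorial_ne_zero k)
        have hs0 : (s.factorial : ℚ) ≠ 0 := Nat.cast_ne_zero.mpr (Nat.factorial_ne_zero s)
        have hC : ((s + k).choose k : ℚ) =
            ((s + k).factorial : ℚ) / ((k.factorial : ℚ) * (s.factorial : ℚ)) := by
          rw [eq_div_iff (by positivity)]
          linear_combination hch
        rw [hC, hfs]
        field_simp
      -- per-term
      have hterm : ∀ k : ℕ, 1 ≤ k → k ≤ s + 1 →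
          ((s : ℚ) + 1) * ((1 / (k.factorial : ℚ)) * PowerSeries.coeff (s + 1)
            ((fun p => PowerSeries.derivative ℚ p)^[k - 1] (f ^ k))) =
          ((s + k).choose k : ℚ) * PowerSeries.coeff s (e ^ k) := by
        intro k hk hks
        rw [coeff_iter_deriv (f ^ k) (k - 1) (s + 1),
          show s + 1 + (k - 1) = s + k by omega,
          show f ^ k = X ^ k * e ^ k by rw [← hXe, mul_pow],
          PowerSeries.coeff_X_pow_mul (e ^ k) k s]
        have := hnum k hk
        linear_combination (PowerSeries.coeff s (e ^ k)) * this
      -- expand RHS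
      rw [hg, map_add, PowerSeries.coeff_mk, mul_add, Finset.mul_sum]
      have hXterm : ((s : ℚ) + 1) * PowerSeries.coeff (s + 1) X =
          (if s = 0 then (1 : ℚ) else 0) := by
        cases s with
        | zero => simp
        | succ t => rw [PowerSeries.coeff_X, if_neg (by omega), mul_zero, if_neg (by omega)]
      rw [hXterm]
      have hsum2 : ∑ i ∈ Icc 1 (s + 1), ((s : ℚ) + 1) * (1 / (i.factorial : ℚ) *
            PowerSeries.coeff (s + 1) ((fun p => PowerSeries.derivative ℚ p)^[i - 1] (f ^ i)))
          = ∑ k ∈ Icc 1 s, ((s + k).choose k : ℚ) * PowerSeries.coeff s (e ^ k) := by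
        rw [← Finset.Ico_add_one_right_eq_Icc 1 (s + 1), Finset.sum_Ico_succ_top (by omega),
          Finset.Ico_add_one_right_eq_Icc 1 s]
        rw [hterm (s + 1) (by omega) (le_refl _),
          coeff_pow_zero he0 (Nat.lt_succ_self s), mul_zero, add_zero]
        apply Finset.sum_congr rfl
        intro k hk
        simp only [Finset.mem_Icc] at hk
        exact hterm k hk.1 (by omega)
      rw [hsum2]
      -- expand LHS
      rw [Finset.sum_range_succ']
      rw [show Icc 1 s = Ico 1 (s + 1) from (Finset.Ico_add_one_right_eq_Icc 1 s).symm,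
        Finset.sum_Ico_eq_sum_range]
      simp only [Nat.add_sub_cancel]
      rw [add_comm]
      congr 1
      · rw [show s + 1 + 0 - 1 = s by omega, Nat.choose_zero_right, Nat.cast_one, one_mul,
          pow_zero, PowerSeries.coeff_one]
      · apply Finset.sum_congr rfl
        intro i _
        rw [show s + 1 + (i + 1) - 1 = s + (1 + i) by omega, show i + 1 = 1 + i by omega]
  -- conclude
  have hgh : psComp g h = X := by rw [← hwg]; exact hw
  have hg0 : PowerSeries.constantCoeff g = 0 := by rw [← hwg]; exact hw0
  have hg1 : PowerSeries.coeff 1 g = 1 := by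
    rw [← hwg]
    have := lagrange h0 h1 hhA hA0 hw 0
    rw [pow_one, PowerSeries.coeff_zero_eq_constantCoeff, hA0] at this
    simpa using this
  constructor
  · -- psComp h g = X
    set v : PowerSeries ℚ := PowerSeries.mk (wc g) with hvdef
    have hv : psComp v g = X := psComp_wc hg0 hg1
    have hveq : v = h := by
      calc v = psComp v X := (psComp_id v).symm
        _ = psComp v (psComp g h) := by rw [hgh]
        _ = psComp (psComp v g) h := (psComp_assoc hg0 h0 v).symm
        _ = psComp X h := by rw [hv]
        _ = h := psComp_X h0
    rw [← hveq]
    exact hv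
  · exact hgh
end
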